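/- arXiv:2309.03218 — 4 statements merged into one kernel-verified Lean document; each statement's English description precedes it below -/
import Mathlib

section
/- For 3 ≤ s ≤ 5, the upper sieve function F satisfies F(s) = (2e^γ/s)·(1 + ∫₂^{s−1} log(t−1)/t dt). -/
/-- For `3 ≤ s ≤ 5`, the upper linear sieve function `F` satisfies
`F s = (2 e^γ / s) · (1 + ∫₂^{s-1} log(t-1)/t dt)`. -/
theorem linear_sieve_F_eq_on_three_five
    (F f : ℝ → ℝ)
    (hFcont : ContinuousOn F (Set.Ioi 0)) (hfcont : ContinuousOn f (Set.Ioi 0))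
    (hFinit : ∀ s : ℝ, 0 < s → s ≤ 2 →
      F s = 2 * Real.exp Real.eulerMascheroniConstant / s)
    (hfinit : ∀ s : ℝ, 0 < s → s ≤ 2 → f s = 0)
    (hFdiff : ∀ s : ℝ, 2 ≤ s →
      HasDerivWithinAt (fun x => x * F x) (f (s - 1)) (Set.Ici 2) s)
    (hfdiff : ∀ s : ℝ, 2 ≤ s →
      HasDerivWithinAt (fun x => x * f x) (F (s - 1)) (Set.Ici 2) s) :
    ∀ s : ℝ, 3 ≤ s → s ≤ 5 →
      F s = 2 * Real.exp Real.eulerMascheroniConstant / s *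
        (1 + ∫ t in (2:ℝ)..(s - 1), Real.log (t - 1) / t) := by
  set E : ℝ := Real.exp Real.eulerMascheroniConstant with hE
  -- FTC for x * F x
  have ftcF : ∀ a b : ℝ, 2 ≤ a → a ≤ b →
      ∫ t in a..b, f (t - 1) = b * F b - a * F a := by
    intro a b ha hab
    apply intervalIntegral.integral_eq_sub_of_hasDeriv_right_of_le hab
    · exact continuousOn_id.mul (hFcont.mono fun x hx =>
        Set.mem_Ioi.2 (by linarith [hx.1]))
    · intro x hx
      exact (hFdiff x (ha.trans hx.1.le)).mono fun y hy =>
        Set.mem_Ici.2 (le_of_lt (lt_of_le_of_lt (ha.trans hx.1.le) hy))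
    · apply ContinuousOn.intervalIntegrable
      apply hfcont.comp (by fun_prop : ContinuousOn (fun t : ℝ => t - 1) _)
      intro t ht
      rw [Set.uIcc_of_le hab] at ht
      exact Set.mem_Ioi.2 (show (0:ℝ) < t - 1 by linarith [ht.1])
  have ftcf : ∀ a b : ℝ, 2 ≤ a → a ≤ b →
      ∫ t in a..b, F (t - 1) = b * f b - a * f a := by
    intro a b ha hab
    apply intervalIntegral.integral_eq_sub_of_hasDeriv_right_of_le hab
    · exact continuousOn_id.mul (hfcont.mono fun x hx =>
        Set.mem_Ioi.2 (by linarith [hx.1]))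
    · intro x hx
      exact (hfdiff x (ha.trans hx.1.le)).mono fun y hy =>
        Set.mem_Ici.2 (le_of_lt (lt_of_le_of_lt (ha.trans hx.1.le) hy))
    · apply ContinuousOn.intervalIntegrable
      apply hFcont.comp (by fun_prop : ContinuousOn (fun t : ℝ => t - 1) _)
      intro t ht
      rw [Set.uIcc_of_le hab] at ht
      exact Set.mem_Ioi.2 (show (0:ℝ) < t - 1 by linarith [ht.1])
  -- F on (0, 3]
  have hFle3 : ∀ s : ℝ, 0 < s → s ≤ 3 → F s = 2 * E / s := by
    intro s hs hs3
    rcases le_or_gt s 2 with h | h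
    · exact hFinit s hs h
    · have key := ftcF 2 s le_rfl h.le
      have hzero : (∫ t in (2:ℝ)..s, f (t - 1)) = 0 := by
        rw [intervalIntegral.integral_congr (g := fun _ => (0:ℝ))]
        · simp
        · intro t ht
          rw [Set.uIcc_of_le h.le] at ht
          exact hfinit (t - 1) (by linarith [ht.1]) (by linarith [ht.2])
      have h2 : F 2 = 2 * E / 2 := hFinit 2 two_pos le_rfl
      rw [hzero, h2] at key
      field_simp at key ⊢
      linarith
  -- f on [2, 4]
  have hf24 : ∀ s : ℝ, 2 ≤ s → s ≤ 4 → f s = 2 * E * Real.log (s - 1) / s := by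
    intro s h2 h4
    have key := ftcf 2 s le_rfl h2
    have hint : (∫ t in (2:ℝ)..s, F (t - 1)) = 2 * E * Real.log (s - 1) := by
      rw [intervalIntegral.integral_congr
        (g := fun t : ℝ => 2 * E * (1 / (t - 1)))]
      · rw [intervalIntegral.integral_const_mul]
        have hcs : (∫ x in (2:ℝ)..s, 1 / (x - 1)) = ∫ x in (1:ℝ)..(s - 1), 1 / x := by
          have h := intervalIntegral.integral_comp_sub_right (a := 2) (b := s)
            (fun u : ℝ => 1 / u) 1
          rwa [show (2:ℝ) - 1 = 1 by norm_num] at h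
        rw [hcs, integral_one_div (by
          intro hmem
          rw [Set.uIcc_of_le (by linarith : (1:ℝ) ≤ s - 1)] at hmem
          linarith [hmem.1])]
        norm_num
      · intro t ht
        rw [Set.uIcc_of_le h2] at ht
        show F (t - 1) = 2 * E * (1 / (t - 1))
        rw [hFle3 (t - 1) (by linarith [ht.1]) (by linarith [ht.2])]
        ring
    rw [hint, hfinit 2 two_pos le_rfl] at key
    have hs : s ≠ 0 := by positivity
    field_simp at key ⊢
    linarith
  -- main
  intro s hs3 hs5
  have key := ftcF 3 s (by norm_num) hs3
  have hcomp : (∫ t in (3:ℝ)..s, f (t - 1)) = ∫ u in (2:ℝ)..(s - 1), f u := by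
    have h := intervalIntegral.integral_comp_sub_right (a := 3) (b := s)
      (fun u : ℝ => f u) 1
    rwa [show (3:ℝ) - 1 = 2 by norm_num] at h
  have hint : (∫ t in (3:ℝ)..s, f (t - 1))
      = 2 * E * ∫ t in (2:ℝ)..(s - 1), Real.log (t - 1) / t := by
    rw [hcomp, intervalIntegral.integral_congr
      (g := fun u : ℝ => 2 * E * (Real.log (u - 1) / u))]
    · rw [intervalIntegral.integral_const_mul]
    · intro u hu
      rw [Set.uIcc_of_le (by linarith : (2:ℝ) ≤ s - 1)] at hu
      show f u = 2 * E * (Real.log (u - 1) / u)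
      rw [hf24 u hu.1 (by linarith [hu.2])]
      ring
  rw [hint, hFle3 3 (by norm_num) le_rfl] at key
  have hs : s ≠ 0 := by positivity
  field_simp at key ⊢
  linarith
end

section
/- For 4 ≤ s ≤ 6, the lower sieve function f satisfies f(s) = (2e^γ/s)·(log(s−1) + ∫₃^{s−1} (1/t)·(∫₂^{t−1} log(u−1)/u du) dt). -/
open Real Set MeasureTheory intervalIntegral

private lemma ftc_key (g d : ℝ → ℝ) (a b : ℝ) (ha : 2 ≤ a) (hab : a ≤ b)
    (hg : ContinuousOn g (Icc a b))
    (hd : ∀ s ∈ Icc a b, HasDerivWithinAt g (d s) (Ici 2) s)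
    (hint : IntervalIntegrable d volume a b) :
    ∫ t in a..b, d t = g b - g a := by
  refine integral_eq_sub_of_hasDeriv_right_of_le hab hg (fun x hx => ?_) hint
  exact (hd x ⟨hx.1.le, hx.2.le⟩).mono fun y hy => (ha.trans hx.1.le).trans hy.le


/-- For `4 ≤ s ≤ 6`, the lower linear sieve function `f` satisfies
`f s = (2 e^γ / s) · (log(s-1) + ∫₃^{s-1} (1/t) ∫₂^{t-1} log(u-1)/u du dt)`. -/
theorem linear_sieve_f_eq_on_four_six
    (F f : ℝ → ℝ)
    (hFcont : ContinuousOn F (Set.Ioi 0)) (hfcont : ContinuousOn f (Set.Ioi 0))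
    (hFinit : ∀ s : ℝ, 0 < s → s ≤ 2 →
      F s = 2 * Real.exp Real.eulerMascheroniConstant / s)
    (hfinit : ∀ s : ℝ, 0 < s → s ≤ 2 → f s = 0)
    (hFdiff : ∀ s : ℝ, 2 ≤ s →
      HasDerivWithinAt (fun x => x * F x) (f (s - 1)) (Set.Ici 2) s)
    (hfdiff : ∀ s : ℝ, 2 ≤ s →
      HasDerivWithinAt (fun x => x * f x) (F (s - 1)) (Set.Ici 2) s) :
    ∀ s : ℝ, 4 ≤ s → s ≤ 6 →
      f s = 2 * Real.exp Real.eulerMascheroniConstant / s *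
        (Real.log (s - 1) +
          ∫ t in (3:ℝ)..(s - 1), (1 / t) * ∫ u in (2:ℝ)..(t - 1), Real.log (u - 1) / u) := by
  set c : ℝ := 2 * Real.exp Real.eulerMascheroniConstant with hc
  -- continuity of shifted functions
  have hFshift : ∀ a b : ℝ, 2 ≤ a → ContinuousOn (fun t => F (t - 1)) (Icc a b) := by
    intro a b ha
    refine hFcont.comp (continuousOn_id.sub continuousOn_const) fun t ht => ?_
    have : (2:ℝ) ≤ t := ha.trans ht.1
    simp only [mem_Ioi]; linarith
  have hfshift : ∀ a b : ℝ, 2 ≤ a → ContinuousOn (fun t => f (t - 1)) (Icc a b) := by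
    intro a b ha
    refine hfcont.comp (continuousOn_id.sub continuousOn_const) fun t ht => ?_
    have : (2:ℝ) ≤ t := ha.trans ht.1
    simp only [mem_Ioi]; linarith
  have hgFcont : ∀ a b : ℝ, 0 < a → ContinuousOn (fun x => x * F x) (Icc a b) := by
    intro a b ha
    exact continuousOn_id.mul (hFcont.mono fun t ht => lt_of_lt_of_le ha ht.1)
  have hgfcont : ∀ a b : ℝ, 0 < a → ContinuousOn (fun x => x * f x) (Icc a b) := by
    intro a b ha
    exact continuousOn_id.mul (hfcont.mono fun t ht => lt_of_lt_of_le ha ht.1)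
  -- Step A : F s = c / s for 0 < s ≤ 3
  have stepA : ∀ s : ℝ, 0 < s → s ≤ 3 → F s = c / s := by
    intro s hs hs3
    rcases le_or_gt s 2 with h | h
    · exact hFinit s hs h
    · have h2 : (2:ℝ) ≤ s := h.le
      have key := ftc_key (fun x => x * F x) (fun t => f (t - 1)) 2 s le_rfl h2
        (hgFcont 2 s two_pos)
        (fun t ht => hFdiff t ht.1)
        ((hfshift 2 s le_rfl).intervalIntegrable_of_Icc h2)
      have hzero : ∀ t ∈ uIcc (2:ℝ) s, f (t - 1) = 0 := by
        intro t ht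
        rw [uIcc_of_le h2] at ht
        exact hfinit _ (by linarith [ht.1]) (by linarith [ht.2, hs3])
      rw [integral_congr hzero] at key
      simp only [intervalIntegral.integral_zero] at key
      have hF2 : F 2 = c / 2 := hFinit 2 two_pos le_rfl
      have : s * F s = c := by rw [hF2] at key; linarith
      field_simp [ne_of_gt (lt_trans two_pos h)] at this ⊢
      linarith
  -- Step B : f s = c / s * log (s-1) for 2 ≤ s ≤ 4
  have stepB : ∀ s : ℝ, 2 ≤ s → s ≤ 4 → f s = c / s * Real.log (s - 1) := by
    intro s h2 h4
    have key := ftc_key (fun x => x * f x) (fun t => F (t - 1)) 2 s le_rfl h2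
      (hgfcont 2 s two_pos)
      (fun t ht => hfdiff t ht.1)
      ((hFshift 2 s le_rfl).intervalIntegrable_of_Icc h2)
    have hcongr : ∀ t ∈ uIcc (2:ℝ) s, F (t - 1) = c / (t - 1) := by
      intro t ht
      rw [uIcc_of_le h2] at ht
      exact stepA _ (by linarith [ht.1]) (by linarith [ht.2])
    rw [integral_congr hcongr] at key
    have hshift : (∫ t in (2:ℝ)..s, c / (t - 1)) = ∫ u in (1:ℝ)..(s-1), c / u := by
      have h := intervalIntegral.integral_comp_sub_right (fun u => c / u) 1 (a := 2) (b := s)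
      norm_num only at h
      exact h
    have hval : (∫ u in (1:ℝ)..(s-1), c / u) = c * Real.log (s - 1) := by
      have h0 : (0:ℝ) ∉ Set.uIcc (1:ℝ) (s - 1) := by
        rw [uIcc_of_le (by linarith)]
        intro hm; exact absurd hm.1 (by norm_num)
      calc (∫ u in (1:ℝ)..(s-1), c / u) = ∫ u in (1:ℝ)..(s-1), c * (1 / u) := by
            congr 1; funext u; rw [mul_one_div]
        _ = c * Real.log ((s-1) / 1) := by
            rw [intervalIntegral.integral_const_mul, integral_one_div h0]
        _ = c * Real.log (s - 1) := by rw [div_one]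
    beta_reduce at key
    rw [hshift, hval, hfinit 2 two_pos le_rfl] at key
    have hs0 : s ≠ 0 := by positivity
    field_simp at key ⊢
    linarith
  -- Step C : F s = c / s * (1 + ∫ u in 2..(s-1), log(u-1)/u) for 3 ≤ s ≤ 5
  have stepC : ∀ s : ℝ, 3 ≤ s → s ≤ 5 →
      F s = c / s * (1 + ∫ u in (2:ℝ)..(s-1), Real.log (u - 1) / u) := by
    intro s h3 h5
    have key := ftc_key (fun x => x * F x) (fun t => f (t - 1)) 3 s (by norm_num) h3
      (hgFcont 3 s (by norm_num))
      (fun t ht => hFdiff t (by linarith [ht.1]))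
      ((hfshift 3 s (by norm_num)).intervalIntegrable_of_Icc h3)
    have hcongr : ∀ t ∈ uIcc (3:ℝ) s, f (t - 1) = c / (t - 1) * Real.log (t - 1 - 1) := by
      intro t ht
      rw [uIcc_of_le h3] at ht
      exact stepB _ (by linarith [ht.1]) (by linarith [ht.2])
    rw [integral_congr hcongr] at key
    have hshift : (∫ t in (3:ℝ)..s, c / (t-1) * Real.log (t - 1 - 1))
        = ∫ u in (2:ℝ)..(s-1), c / u * Real.log (u - 1) := by
      have h := intervalIntegral.integral_comp_sub_right
        (fun u => c / u * Real.log (u - 1)) 1 (a := 3) (b := s)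
      norm_num only at h
      exact h
    have hpull : (∫ u in (2:ℝ)..(s-1), c / u * Real.log (u - 1))
        = c * ∫ u in (2:ℝ)..(s-1), Real.log (u - 1) / u := by
      rw [← intervalIntegral.integral_const_mul]
      congr 1; funext u; ring
    rw [hshift, hpull] at key
    have hF3 : F 3 = c / 3 := stepA 3 (by norm_num) le_rfl
    beta_reduce at key
    rw [hF3] at key
    have hs0 : s ≠ 0 := by positivity
    field_simp at key ⊢
    linarith
  -- final
  intro s h4 h6
  have key := ftc_key (fun x => x * f x) (fun t => F (t - 1)) 4 s (by norm_num) h4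
    (hgfcont 4 s (by norm_num))
    (fun t ht => hfdiff t (by linarith [ht.1]))
    ((hFshift 4 s (by norm_num)).intervalIntegrable_of_Icc h4)
  have hshift : (∫ t in (4:ℝ)..s, F (t - 1)) = ∫ t in (3:ℝ)..(s-1), F t := by
    have h := intervalIntegral.integral_comp_sub_right F 1 (a := 4) (b := s)
    norm_num only at h
    exact h
  -- split ∫ F over [3, s-1]
  have hIF : IntervalIntegrable F volume 3 (s-1) :=
    (hFcont.mono (fun t ht => lt_of_lt_of_le (by norm_num : (0:ℝ) < 3) ht.1)
      : ContinuousOn F (Icc 3 (s-1))).intervalIntegrable_of_Icc (by linarith)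
  have hIc : IntervalIntegrable (fun t => c / t) volume 3 (s-1) := by
    apply ContinuousOn.intervalIntegrable_of_Icc (by linarith)
    exact continuousOn_const.div continuousOn_id (fun t ht => by
      have := ht.1; intro h0; rw [h0] at this; norm_num at this)
  have hsplit : (∫ t in (3:ℝ)..(s-1), F t)
      = (∫ t in (3:ℝ)..(s-1), c / t) + ∫ t in (3:ℝ)..(s-1), (F t - c / t) := by
    rw [← intervalIntegral.integral_add hIc (hIF.sub hIc)]
    congr 1; funext t; ring
  have hlogpart : (∫ t in (3:ℝ)..(s-1), c / t) = c * (Real.log (s-1) - Real.log 3) := by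
    have h0 : (0:ℝ) ∉ Set.uIcc (3:ℝ) (s - 1) := by
      rw [uIcc_of_le (by linarith)]
      intro hm; exact absurd hm.1 (by norm_num)
    calc (∫ t in (3:ℝ)..(s-1), c / t) = ∫ t in (3:ℝ)..(s-1), c * (1 / t) := by
          congr 1; funext t; rw [mul_one_div]
      _ = c * Real.log ((s-1) / 3) := by
          rw [intervalIntegral.integral_const_mul, integral_one_div h0]
      _ = c * (Real.log (s-1) - Real.log 3) := by
          rw [Real.log_div (by linarith) (by norm_num)]
  have hrest : (∫ t in (3:ℝ)..(s-1), (F t - c / t))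
      = c * ∫ t in (3:ℝ)..(s-1), (1 / t) * ∫ u in (2:ℝ)..(t - 1), Real.log (u - 1) / u := by
    have hcongr : ∀ t ∈ uIcc (3:ℝ) (s-1),
        F t - c / t = c * ((1 / t) * ∫ u in (2:ℝ)..(t - 1), Real.log (u - 1) / u) := by
      intro t ht
      rw [uIcc_of_le (by linarith)] at ht
      rw [stepC t ht.1 (by linarith [ht.2])]
      have ht0 : t ≠ 0 := by have := ht.1; intro h0; rw [h0] at this; norm_num at this
      field_simp
      ring
    rw [integral_congr hcongr, intervalIntegral.integral_const_mul]
  beta_reduce at key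
  rw [hshift, hsplit, hlogpart, hrest] at key
  have hf4 : f 4 = c / 4 * Real.log 3 := by
    have := stepB 4 (by norm_num) le_rfl; norm_num at this; exact this
  rw [hf4] at key
  have hs0 : s ≠ 0 := by positivity
  field_simp at key ⊢
  nlinarith [key]
end

section
/- The Buchstab function w satisfies w(u) ≤ 1/1.763 for all u ≥ 2. -/
/-!
On `[2, 3]` the delay equation integrates to `u w(u) = 1 + log (u - 1)`, and the tangent line of
`log` at `c` gives `1 + log x ≤ (x + 1) / c` as soon as `log c ≤ 1 / c`, which holds for
`c = 1.763`; hence `w ≤ 1 / c` on `[2, 3]`. Beyond `3`, `(M t - t w(t))' = M - w(t - 1)`, so a bound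
`w ≤ M` on `[2, u - 1]` together with `w(3) ≤ M` yields `w(u) ≤ M`, and the bound propagates to
`[2, ∞)` interval by interval.
-/

open Real Set

lemma log_1_763_lt_one_div : log 1.763 < 1 / 1.763 := by
  rw [log_lt_iff_lt_exp (by norm_num)]
  refine lt_of_lt_of_le ?_ (sum_le_exp_of_nonneg (x := 1 / 1.763) (by norm_num) 6)
  simp only [Finset.sum_range_succ, Finset.sum_range_zero]
  norm_num [Nat.factorial]

lemma one_add_log_le_div {c x : ℝ} (hc : 0 < c) (hx : 0 < x) (hlog : log c ≤ 1 / c) :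
    1 + log x ≤ (x + 1) / c := by
  have htangent : log (x / c) ≤ x / c - 1 := log_le_sub_one_of_pos (by positivity)
  rw [log_div hx.ne' hc.ne'] at htangent
  have hsplit : (x + 1) / c = x / c + 1 / c := add_div x 1 c
  linarith

section Buchstab

variable {w : ℝ → ℝ}

lemma mul_eq_one_add_log_of_mem_Icc_two_three
    (hwinit : ∀ u : ℝ, 1 ≤ u → u ≤ 2 → w u = 1 / u)
    (hwdiff : ∀ u : ℝ, 2 ≤ u → HasDerivWithinAt (fun x => x * w x) (w (u - 1)) (Ici 2) u)
    {u : ℝ} (hu : u ∈ Icc 2 3) : u * w u = 1 + log (u - 1) := by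
  let f : ℝ → ℝ := fun t => t * w t - log (t - 1)
  have hcont : ContinuousOn f (Icc 2 3) := by
    refine ContinuousOn.sub (fun t ht => ((hwdiff t ht.1).continuousWithinAt).mono
      Icc_subset_Ici_self) ?_
    exact (continuousOn_id.sub continuousOn_const).log fun t ht =>
      (show (0 : ℝ) < t - 1 by linarith [ht.1]).ne'
  have hderiv : ∀ t ∈ Ico (2 : ℝ) 3, HasDerivWithinAt f 0 (Ici t) t := by
    intro t ht
    have hlog : HasDerivAt (fun s => log (s - 1)) (1 / (t - 1)) t := by
      simpa [one_div] using ((hasDerivAt_id' t).sub_const 1).log (by linarith [ht.1])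
    have hmul := (hwdiff t ht.1).mono (Ici_subset_Ici.2 ht.1)
    rw [hwinit (t - 1) (by linarith [ht.1]) (by linarith [ht.2])] at hmul
    have hsub := hmul.sub hlog.hasDerivWithinAt
    rwa [sub_self] at hsub
  have hf2 : f 2 = 1 := by norm_num [f, hwinit 2 one_le_two le_rfl]
  have hfu : f u = 1 := (constant_of_has_deriv_right_zero hcont hderiv u hu).trans hf2
  simp only [f] at hfu
  linarith

lemma le_one_div_of_mem_Icc_two_three
    (hwinit : ∀ u : ℝ, 1 ≤ u → u ≤ 2 → w u = 1 / u)
    (hwdiff : ∀ u : ℝ, 2 ≤ u → HasDerivWithinAt (fun x => x * w x) (w (u - 1)) (Ici 2) u)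
    {c : ℝ} (hc : 0 < c) (hlog : log c ≤ 1 / c) {u : ℝ} (hu : u ∈ Icc 2 3) : w u ≤ 1 / c := by
  have hu0 : 0 < u := by linarith [hu.1]
  have hmul : u * w u ≤ u * (1 / c) := by
    rw [mul_eq_one_add_log_of_mem_Icc_two_three hwinit hwdiff hu, mul_one_div]
    simpa using one_add_log_le_div hc (by linarith [hu.1] : 0 < u - 1) hlog
  exact le_of_mul_le_mul_left hmul hu0

lemma le_of_forall_mem_Icc_sub_one_le
    (hwdiff : ∀ u : ℝ, 2 ≤ u → HasDerivWithinAt (fun x => x * w x) (w (u - 1)) (Ici 2) u)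
    {M u : ℝ} (hu : 3 ≤ u) (h3 : w 3 ≤ M) (hprev : ∀ t ∈ Icc 2 (u - 1), w t ≤ M) :
    w u ≤ M := by
  let g : ℝ → ℝ := fun t => M * t - t * w t
  have hmono : MonotoneOn g (Icc 3 u) := by
    refine monotoneOn_of_hasDerivWithinAt_nonneg (f' := fun t => M - w (t - 1))
      (convex_Icc 3 u) ?_ ?_ ?_
    · have hcont : ContinuousOn (fun x => x * w x) (Ici 2) := fun t ht =>
        (hwdiff t ht).continuousWithinAt
      exact (continuousOn_const.mul continuousOn_id).sub
        (hcont.mono fun t ht => by simp only [mem_Ici]; linarith [ht.1])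
    · intro t ht
      rw [interior_Icc] at ht
      have hmul := (hwdiff t (by linarith [ht.1])).hasDerivAt (Ici_mem_nhds (by linarith [ht.1]))
      have hsub := ((hasDerivAt_id' t).const_mul M).sub hmul
      rw [mul_one] at hsub
      exact hsub.hasDerivWithinAt
    · intro t ht
      rw [interior_Icc] at ht
      linarith [hprev (t - 1) ⟨by linarith [ht.1], by linarith [ht.2]⟩]
  have hg : g 3 ≤ g u := hmono ⟨le_rfl, hu⟩ ⟨hu, le_rfl⟩ hu
  simp only [g] at hg
  nlinarith

lemma le_of_forall_mem_Icc_two_three_le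
    (hwdiff : ∀ u : ℝ, 2 ≤ u → HasDerivWithinAt (fun x => x * w x) (w (u - 1)) (Ici 2) u)
    {M : ℝ} (hbase : ∀ t ∈ Icc (2 : ℝ) 3, w t ≤ M) {u : ℝ} (hu : 2 ≤ u) : w u ≤ M := by
  suffices h : ∀ n : ℕ, ∀ t ∈ Icc (2 : ℝ) (n + 3), w t ≤ M by
    obtain ⟨n, hn⟩ := exists_nat_ge u
    exact h n u ⟨hu, by linarith⟩
  intro n
  induction n with
  | zero => simpa using hbase
  | succ n ih =>
    intro t ht
    rcases le_or_gt t 3 with h3 | h3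
    · exact hbase t ⟨ht.1, h3⟩
    refine le_of_forall_mem_Icc_sub_one_le hwdiff h3.le (hbase 3 (by norm_num)) fun s hs => ?_
    exact ih s ⟨hs.1, by push_cast at ht; linarith [hs.2, ht.2]⟩

end Buchstab

theorem buchstab_le_of_two_le_general
    (w : ℝ → ℝ)
    (hwinit : ∀ u : ℝ, 1 ≤ u → u ≤ 2 → w u = 1 / u)
    (hwdiff : ∀ u : ℝ, 2 ≤ u →
      HasDerivWithinAt (fun x => x * w x) (w (u - 1)) (Set.Ici 2) u) :
    ∀ u : ℝ, 2 ≤ u → w u ≤ 1 / 1.763 := fun _ hu =>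
  le_of_forall_mem_Icc_two_three_le hwdiff (fun _ ht =>
    le_one_div_of_mem_Icc_two_three hwinit hwdiff (by norm_num) log_1_763_lt_one_div.le ht) hu

/-- The Buchstab function `w` satisfies `w u ≤ 1/1.763` for all `u ≥ 2`. -/
theorem buchstab_le_of_two_le
    (w : ℝ → ℝ)
    (hwcont : ContinuousOn w (Set.Ici 1))
    (hwinit : ∀ u : ℝ, 1 ≤ u → u ≤ 2 → w u = 1 / u)
    (hwdiff : ∀ u : ℝ, 2 ≤ u →
      HasDerivWithinAt (fun x => x * w x) (w (u - 1)) (Set.Ici 2) u) :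
    ∀ u : ℝ, 2 ≤ u → w u ≤ 1 / 1.763 :=
  buchstab_le_of_two_le_general w hwinit hwdiff
end

section
/- The Buchstab function w satisfies w(u) < 0.5644 for all u ≥ 3 and w(u) < 0.5617 for all u ≥ 4. -/
open Set MeasureTheory intervalIntegral

namespace BuchstabAux

variable {w : ℝ → ℝ}

theorem cont_shift (hwcont : ContinuousOn w (Set.Ici 1)) {a b : ℝ} (ha : 2 ≤ a) (hab : a ≤ b) :
    ContinuousOn (fun t : ℝ => w (t - 1)) (Set.Icc a b) := by
  apply hwcont.comp (Continuous.continuousOn (by continuity))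
  intro t ht
  simp only [Set.mem_Icc, Set.mem_Ici] at *
  linarith [ht.1]

theorem key (hwcont : ContinuousOn w (Set.Ici 1))
    (hwdiff : ∀ u : ℝ, 2 ≤ u →
      HasDerivWithinAt (fun x => x * w x) (w (u - 1)) (Set.Ici 2) u)
    {a b : ℝ} (ha : 2 ≤ a) (hab : a ≤ b) :
    b * w b = a * w a + ∫ t in a..b, w (t - 1) := by
  have hint : IntervalIntegrable (fun t : ℝ => w (t - 1)) volume a b := by
    apply ContinuousOn.intervalIntegrable
    rw [Set.uIcc_of_le hab]
    exact cont_shift hwcont ha hab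
  have hcont : ContinuousOn (fun x : ℝ => x * w x) (Set.Icc a b) := by
    apply ContinuousOn.mul continuousOn_id
    apply hwcont.mono
    intro t ht
    simp only [Set.mem_Icc, Set.mem_Ici] at *
    linarith [ht.1]
  have hderiv : ∀ x ∈ Set.Ioo a b,
      HasDerivWithinAt (fun x : ℝ => x * w x) (w (x - 1)) (Set.Ioi x) x := by
    intro x hx
    have h2x : (2:ℝ) < x := lt_of_le_of_lt ha hx.1
    exact (((hwdiff x h2x.le).hasDerivAt (Ici_mem_nhds h2x)).hasDerivWithinAt)
  have h := intervalIntegral.integral_eq_sub_of_hasDeriv_right_of_le hab hcont hderiv hint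
  rw [h]; ring

/-- pointwise bound on an interval: `w s ≤ S + c / s`. -/
theorem pointwise_bound (hwcont : ContinuousOn w (Set.Ici 1))
    (hwdiff : ∀ u : ℝ, 2 ≤ u →
      HasDerivWithinAt (fun x => x * w x) (w (u - 1)) (Set.Ici 2) u)
    {a b A S c : ℝ} (ha : 2 ≤ a) (hab : a ≤ b)
    (hA : a * w a ≤ A)
    (hS : ∀ s ∈ Set.Icc (a - 1) (b - 1), w s ≤ S)
    (hc : A - a * S = c) :
    ∀ u ∈ Set.Icc a b, w u ≤ S + c / u := by
  intro u hu
  have hau : a ≤ u := hu.1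
  have hub : u ≤ b := hu.2
  have hu0 : (0:ℝ) < u := by linarith
  have hk := key hwcont hwdiff ha hau
  have hintle : (∫ t in a..u, w (t - 1)) ≤ (u - a) * S := by
    have hmono : (∫ t in a..u, w (t - 1)) ≤ ∫ _t in a..u, S := by
      apply intervalIntegral.integral_mono_on hau
      · apply ContinuousOn.intervalIntegrable
        rw [Set.uIcc_of_le hau]
        exact cont_shift hwcont ha hau
      · exact intervalIntegrable_const
      · intro t ht
        exact hS (t - 1) ⟨by linarith [ht.1], by linarith [ht.2]⟩
    simpa using hmono
  have huw : u * w u ≤ u * S + c := by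
    rw [hk]
    have : a * w a + (u - a) * S ≤ u * S + c := by nlinarith [hA, hc]
    linarith [hintle]
  have hle : w u ≤ (u * S + c) / u := by
    rw [le_div_iff₀ hu0]
    linarith [huw]
  calc w u ≤ (u * S + c) / u := hle
    _ = S + c / u := by field_simp

/-- interval sup bound -/
theorem interval_bound (hwcont : ContinuousOn w (Set.Ici 1))
    (hwdiff : ∀ u : ℝ, 2 ≤ u →
      HasDerivWithinAt (fun x => x * w x) (w (u - 1)) (Set.Ici 2) u)
    {a b A S V : ℝ} (ha : 2 ≤ a) (hab : a ≤ b)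
    (hA : a * w a ≤ A)
    (hS : ∀ s ∈ Set.Icc (a - 1) (b - 1), w s ≤ S)
    (e1 : A ≤ a * V) (e2 : A + (b - a) * S ≤ b * V) :
    ∀ u ∈ Set.Icc a b, w u ≤ V := by
  have hp := pointwise_bound hwcont hwdiff ha hab hA hS rfl
  intro u hu
  have hau : a ≤ u := hu.1
  have hub : u ≤ b := hu.2
  have hu0 : (0:ℝ) < u := by linarith
  have h := hp u hu
  have h2 : u * w u ≤ u * S + (A - a * S) := by
    have := mul_le_mul_of_nonneg_left h hu0.le
    calc u * w u ≤ u * (S + (A - a * S) / u) := this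
      _ = u * S + (A - a * S) := by field_simp
  have h1 : 0 ≤ (b - u) * (a * V - A) := mul_nonneg (by linarith) (by linarith)
  have h2' : 0 ≤ (u - a) * (b * V - (A + (b - a) * S)) := mul_nonneg (by linarith) (by linarith)
  rcases eq_or_lt_of_le hab with heq | hlt
  · have hua : u = a := le_antisymm (heq ▸ hub) hau
    subst hua
    have : u * w u ≤ u * V := by linarith [h2, e1]
    exact le_of_mul_le_mul_left this hu0
  · have hba : (0:ℝ) < b - a := by linarith
    have hlin : (b - a) * (u * S + (A - a * S)) ≤ (b - a) * (u * V) := by nlinarith [h1, h2']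
    have : u * S + (A - a * S) ≤ u * V := le_of_mul_le_mul_left hlin hba
    have : u * w u ≤ u * V := by linarith [h2]
    exact le_of_mul_le_mul_left this hu0

/-- step bound for the endpoint value -/
theorem step (hwcont : ContinuousOn w (Set.Ici 1))
    (hwdiff : ∀ u : ℝ, 2 ≤ u →
      HasDerivWithinAt (fun x => x * w x) (w (u - 1)) (Set.Ici 2) u)
    {a b A S c J A' : ℝ} (ha : 2 ≤ a) (hab : a ≤ b)
    (hA : a * w a ≤ A)
    (hw : ∀ s ∈ Set.Icc (a - 1) (b - 1), w s ≤ S + c / s)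
    (hJ : c * Real.log ((b - 1) / (a - 1)) ≤ J)
    (hfin : A + (b - a) * S + J ≤ A') :
    b * w b ≤ A' := by
  have ha1 : (1:ℝ) ≤ a - 1 := by linarith
  have ha0 : (0:ℝ) < a - 1 := by linarith
  have hab1 : a - 1 ≤ b - 1 := by linarith
  have hk := key hwcont hwdiff ha hab
  have hsub : (∫ t in a..b, w (t - 1)) = ∫ s in (a-1)..(b-1), w s := by
    simpa using intervalIntegral.integral_comp_sub_right (fun s => w s) 1 (a := a) (b := b)
  have hno0 : (0:ℝ) ∉ Set.uIcc (a-1) (b-1) := by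
    rw [Set.uIcc_of_le hab1]
    intro hmem
    exact absurd hmem.1 (by linarith)
  have hgcont : ContinuousOn (fun s : ℝ => S + c * (1 / s)) (Set.uIcc (a-1) (b-1)) := by
    apply ContinuousOn.add continuousOn_const
    apply ContinuousOn.mul continuousOn_const
    apply ContinuousOn.div continuousOn_const continuousOn_id
    intro s hs
    rw [Set.uIcc_of_le hab1] at hs
    intro h0; simp only [id_eq] at h0; rw [h0] at hs; exact absurd hs.1 (by linarith)
  have hwint : IntervalIntegrable w volume (a-1) (b-1) := by
    apply ContinuousOn.intervalIntegrable
    apply hwcont.mono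
    rw [Set.uIcc_of_le hab1]
    intro t ht; exact le_trans ha1 ht.1
  have hmono : (∫ s in (a-1)..(b-1), w s) ≤ ∫ s in (a-1)..(b-1), (S + c * (1/s)) := by
    apply intervalIntegral.integral_mono_on hab1 hwint (hgcont.intervalIntegrable)
    intro s hs
    have := hw s hs
    rw [mul_one_div]
    exact this
  have hint1 : IntervalIntegrable (fun _ : ℝ => S) volume (a-1) (b-1) := intervalIntegrable_const
  have hint2 : IntervalIntegrable (fun s : ℝ => c * (1/s)) volume (a-1) (b-1) := by
    apply ContinuousOn.intervalIntegrable
    apply ContinuousOn.mul continuousOn_const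
    apply ContinuousOn.div continuousOn_const continuousOn_id
    intro s hs
    rw [Set.uIcc_of_le hab1] at hs
    intro h0; simp only [id_eq] at h0; rw [h0] at hs; exact absurd hs.1 (by linarith)
  have heval : (∫ s in (a-1)..(b-1), (S + c * (1/s)))
      = (b - a) * S + c * Real.log ((b-1)/(a-1)) := by
    rw [intervalIntegral.integral_add hint1 hint2, intervalIntegral.integral_const,
      intervalIntegral.integral_const_mul, integral_one_div hno0]
    have : (b - 1 - (a - 1)) = b - a := by ring
    rw [this]
    simp [smul_eq_mul]
  have : b * w b ≤ A + ((b - a) * S + c * Real.log ((b-1)/(a-1))) := by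
    rw [hk]
    have := hmono
    rw [heval] at this
    rw [hsub]
    linarith [hA]
  linarith [hJ]

/-- tail bound -/
theorem tail (hwcont : ContinuousOn w (Set.Ici 1))
    (hwdiff : ∀ u : ℝ, 2 ≤ u →
      HasDerivWithinAt (fun x => x * w x) (w (u - 1)) (Set.Ici 2) u)
    {M : ℝ} (hM4 : ∀ s ∈ Set.Icc (4:ℝ) 5, w s ≤ M) :
    ∀ u : ℝ, 5 ≤ u → w u ≤ M := by
  have main : ∀ n : ℕ, ∀ u ∈ Set.Icc (5:ℝ) (5 + n), w u ≤ M := by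
    intro n
    induction n with
    | zero =>
      intro u hu
      have : u = 5 := le_antisymm (by simpa using hu.2) hu.1
      subst this
      exact hM4 5 (by norm_num)
    | succ n ih =>
      intro u hu
      by_cases hle : u ≤ 5 + n
      · exact ih u ⟨hu.1, hle⟩
      · push_neg at hle
        have hu5 : (5:ℝ) ≤ u := hu.1
        have hk := key hwcont hwdiff (by norm_num) hu5
        have hintle : (∫ t in (5:ℝ)..u, w (t - 1)) ≤ (u - 5) * M := by
          have hmono : (∫ t in (5:ℝ)..u, w (t - 1)) ≤ ∫ _t in (5:ℝ)..u, M := by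
            apply intervalIntegral.integral_mono_on hu5
            · apply ContinuousOn.intervalIntegrable
              rw [Set.uIcc_of_le hu5]
              exact cont_shift hwcont (by norm_num) hu5
            · exact intervalIntegrable_const
            · intro t ht
              rcases le_total (t - 1) 5 with h5 | h5
              · exact hM4 (t-1) ⟨by linarith [ht.1], h5⟩
              · apply ih (t - 1)
                have hu2 : u ≤ 5 + (n+1 : ℕ) := hu.2
                push_cast at hu2
                exact ⟨h5, by linarith [ht.2]⟩
          simpa using hmono
        have h5M : 5 * w 5 ≤ 5 * M := by
          have := hM4 5 (by norm_num)
          linarith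
        have hu0 : (0:ℝ) < u := by linarith
        have : u * w u ≤ u * M := by rw [hk]; nlinarith [hintle, h5M]
        exact le_of_mul_le_mul_left this hu0
  intro u hu
  obtain ⟨n, hn⟩ := exists_nat_ge (u - 5)
  exact main n u ⟨hu, by linarith⟩

end BuchstabAux

theorem logm8 : (117783006299/1000000000000 : ℝ) ≤ Real.log (9/8)
    ∧ Real.log ((9:ℝ)/8) ≤ (117783058569/1000000000000 : ℝ) := by
  have h := Real.abs_log_sub_add_sum_range_le (x := (1/9 : ℝ)) (by rw [abs_of_nonneg] <;> norm_num) 7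
  have e1 : (1:ℝ) - 1/9 = 8/9 := by norm_num
  have e2 : Real.log ((8:ℝ)/9) = -Real.log (9/8) := by
    rw [← Real.log_inv]; norm_num
  rw [e1, e2, abs_le] at h
  have hsum : (∑ i ∈ Finset.range 7, (1/9 : ℝ) ^ (i + 1) / (i + 1))
      = 1/9 + (1/9:ℝ)^2/2 + (1/9:ℝ)^3/3 + (1/9:ℝ)^4/4 + (1/9:ℝ)^5/5 + (1/9:ℝ)^6/6 + (1/9:ℝ)^7/7 := by
    norm_num [Finset.sum_range_succ]
  rw [hsum] at h
  obtain ⟨h1, h2⟩ := h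
  rw [abs_of_nonneg (by norm_num : (0:ℝ) ≤ 1/9)] at h1 h2
  constructor
  · nlinarith [h2]
  · nlinarith [h1]

theorem logm9 : (52680251587/500000000000 : ℝ) ≤ Real.log (10/9)
    ∧ Real.log ((10:ℝ)/9) ≤ (105360525397/1000000000000 : ℝ) := by
  have h := Real.abs_log_sub_add_sum_range_le (x := (1/10 : ℝ)) (by rw [abs_of_nonneg] <;> norm_num) 7
  have e1 : (1:ℝ) - 1/10 = 9/10 := by norm_num
  have e2 : Real.log ((9:ℝ)/10) = -Real.log (10/9) := by
    rw [← Real.log_inv]; norm_num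
  rw [e1, e2, abs_le] at h
  have hsum : (∑ i ∈ Finset.range 7, (1/10 : ℝ) ^ (i + 1) / (i + 1))
      = 1/10 + (1/10:ℝ)^2/2 + (1/10:ℝ)^3/3 + (1/10:ℝ)^4/4 + (1/10:ℝ)^5/5 + (1/10:ℝ)^6/6 + (1/10:ℝ)^7/7 := by
    norm_num [Finset.sum_range_succ]
  rw [hsum] at h
  obtain ⟨h1, h2⟩ := h
  rw [abs_of_nonneg (by norm_num : (0:ℝ) ≤ 1/10)] at h1 h2
  constructor
  · nlinarith [h2]
  · nlinarith [h1]

theorem logm10 : (47655087019/500000000000 : ℝ) ≤ Real.log (11/10)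
    ∧ Real.log ((11:ℝ)/10) ≤ (47655092151/500000000000 : ℝ) := by
  have h := Real.abs_log_sub_add_sum_range_le (x := (1/11 : ℝ)) (by rw [abs_of_nonneg] <;> norm_num) 7
  have e1 : (1:ℝ) - 1/11 = 10/11 := by norm_num
  have e2 : Real.log ((10:ℝ)/11) = -Real.log (11/10) := by
    rw [← Real.log_inv]; norm_num
  rw [e1, e2, abs_le] at h
  have hsum : (∑ i ∈ Finset.range 7, (1/11 : ℝ) ^ (i + 1) / (i + 1))
      = 1/11 + (1/11:ℝ)^2/2 + (1/11:ℝ)^3/3 + (1/11:ℝ)^4/4 + (1/11:ℝ)^5/5 + (1/11:ℝ)^6/6 + (1/11:ℝ)^7/7 := by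
    norm_num [Finset.sum_range_succ]
  rw [hsum] at h
  obtain ⟨h1, h2⟩ := h
  rw [abs_of_nonneg (by norm_num : (0:ℝ) ≤ 1/11)] at h1 h2
  constructor
  · nlinarith [h2]
  · nlinarith [h1]

theorem logm11 : (43505687069/500000000000 : ℝ) ≤ Real.log (12/11)
    ∧ Real.log ((12:ℝ)/11) ≤ (87011379213/1000000000000 : ℝ) := by
  have h := Real.abs_log_sub_add_sum_range_le (x := (1/12 : ℝ)) (by rw [abs_of_nonneg] <;> norm_num) 7
  have e1 : (1:ℝ) - 1/12 = 11/12 := by norm_num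
  have e2 : Real.log ((11:ℝ)/12) = -Real.log (12/11) := by
    rw [← Real.log_inv]; norm_num
  rw [e1, e2, abs_le] at h
  have hsum : (∑ i ∈ Finset.range 7, (1/12 : ℝ) ^ (i + 1) / (i + 1))
      = 1/12 + (1/12:ℝ)^2/2 + (1/12:ℝ)^3/3 + (1/12:ℝ)^4/4 + (1/12:ℝ)^5/5 + (1/12:ℝ)^6/6 + (1/12:ℝ)^7/7 := by
    norm_num [Finset.sum_range_succ]
  rw [hsum] at h
  obtain ⟨h1, h2⟩ := h
  rw [abs_of_nonneg (by norm_num : (0:ℝ) ≤ 1/12)] at h1 h2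
  constructor
  · nlinarith [h2]
  · nlinarith [h1]

theorem logm12 : (4002135309/50000000000 : ℝ) ≤ Real.log (13/12)
    ∧ Real.log ((13:ℝ)/12) ≤ (40021354419/500000000000 : ℝ) := by
  have h := Real.abs_log_sub_add_sum_range_le (x := (1/13 : ℝ)) (by rw [abs_of_nonneg] <;> norm_num) 7
  have e1 : (1:ℝ) - 1/13 = 12/13 := by norm_num
  have e2 : Real.log ((12:ℝ)/13) = -Real.log (13/12) := by
    rw [← Real.log_inv]; norm_num
  rw [e1, e2, abs_le] at h
  have hsum : (∑ i ∈ Finset.range 7, (1/13 : ℝ) ^ (i + 1) / (i + 1))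
      = 1/13 + (1/13:ℝ)^2/2 + (1/13:ℝ)^3/3 + (1/13:ℝ)^4/4 + (1/13:ℝ)^5/5 + (1/13:ℝ)^6/6 + (1/13:ℝ)^7/7 := by
    norm_num [Finset.sum_range_succ]
  rw [hsum] at h
  obtain ⟨h1, h2⟩ := h
  rw [abs_of_nonneg (by norm_num : (0:ℝ) ≤ 1/13)] at h1 h2
  constructor
  · nlinarith [h2]
  · nlinarith [h1]

theorem logm13 : (74107971333/1000000000000 : ℝ) ≤ Real.log (14/13)
    ∧ Real.log ((14:ℝ)/13) ≤ (37053986397/500000000000 : ℝ) := by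
  have h := Real.abs_log_sub_add_sum_range_le (x := (1/14 : ℝ)) (by rw [abs_of_nonneg] <;> norm_num) 7
  have e1 : (1:ℝ) - 1/14 = 13/14 := by norm_num
  have e2 : Real.log ((13:ℝ)/14) = -Real.log (14/13) := by
    rw [← Real.log_inv]; norm_num
  rw [e1, e2, abs_le] at h
  have hsum : (∑ i ∈ Finset.range 7, (1/14 : ℝ) ^ (i + 1) / (i + 1))
      = 1/14 + (1/14:ℝ)^2/2 + (1/14:ℝ)^3/3 + (1/14:ℝ)^4/4 + (1/14:ℝ)^5/5 + (1/14:ℝ)^6/6 + (1/14:ℝ)^7/7 := by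
    norm_num [Finset.sum_range_succ]
  rw [hsum] at h
  obtain ⟨h1, h2⟩ := h
  rw [abs_of_nonneg (by norm_num : (0:ℝ) ≤ 1/14)] at h1 h2
  constructor
  · nlinarith [h2]
  · nlinarith [h1]

theorem logm14 : (68992871017/1000000000000 : ℝ) ≤ Real.log (15/14)
    ∧ Real.log ((15:ℝ)/14) ≤ (34496435927/500000000000 : ℝ) := by
  have h := Real.abs_log_sub_add_sum_range_le (x := (1/15 : ℝ)) (by rw [abs_of_nonneg] <;> norm_num) 7
  have e1 : (1:ℝ) - 1/15 = 14/15 := by norm_num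
  have e2 : Real.log ((14:ℝ)/15) = -Real.log (15/14) := by
    rw [← Real.log_inv]; norm_num
  rw [e1, e2, abs_le] at h
  have hsum : (∑ i ∈ Finset.range 7, (1/15 : ℝ) ^ (i + 1) / (i + 1))
      = 1/15 + (1/15:ℝ)^2/2 + (1/15:ℝ)^3/3 + (1/15:ℝ)^4/4 + (1/15:ℝ)^5/5 + (1/15:ℝ)^6/6 + (1/15:ℝ)^7/7 := by
    norm_num [Finset.sum_range_succ]
  rw [hsum] at h
  obtain ⟨h1, h2⟩ := h
  rw [abs_of_nonneg (by norm_num : (0:ℝ) ≤ 1/15)] at h1 h2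
  constructor
  · nlinarith [h2]
  · nlinarith [h1]

theorem logm15 : (32269260429/500000000000 : ℝ) ≤ Real.log (16/15)
    ∧ Real.log ((16:ℝ)/15) ≤ (16134630339/250000000000 : ℝ) := by
  have h := Real.abs_log_sub_add_sum_range_le (x := (1/16 : ℝ)) (by rw [abs_of_nonneg] <;> norm_num) 7
  have e1 : (1:ℝ) - 1/16 = 15/16 := by norm_num
  have e2 : Real.log ((15:ℝ)/16) = -Real.log (16/15) := by
    rw [← Real.log_inv]; norm_num
  rw [e1, e2, abs_le] at h
  have hsum : (∑ i ∈ Finset.range 7, (1/16 : ℝ) ^ (i + 1) / (i + 1))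
      = 1/16 + (1/16:ℝ)^2/2 + (1/16:ℝ)^3/3 + (1/16:ℝ)^4/4 + (1/16:ℝ)^5/5 + (1/16:ℝ)^6/6 + (1/16:ℝ)^7/7 := by
    norm_num [Finset.sum_range_succ]
  rw [hsum] at h
  obtain ⟨h1, h2⟩ := h
  rw [abs_of_nonneg (by norm_num : (0:ℝ) ≤ 1/16)] at h1 h2
  constructor
  · nlinarith [h2]
  · nlinarith [h1]

theorem logm16 : (12124924329/200000000000 : ℝ) ≤ Real.log (17/16)
    ∧ Real.log ((17:ℝ)/16) ≤ (1212492439/20000000000 : ℝ) := by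
  have h := Real.abs_log_sub_add_sum_range_le (x := (1/17 : ℝ)) (by rw [abs_of_nonneg] <;> norm_num) 7
  have e1 : (1:ℝ) - 1/17 = 16/17 := by norm_num
  have e2 : Real.log ((16:ℝ)/17) = -Real.log (17/16) := by
    rw [← Real.log_inv]; norm_num
  rw [e1, e2, abs_le] at h
  have hsum : (∑ i ∈ Finset.range 7, (1/17 : ℝ) ^ (i + 1) / (i + 1))
      = 1/17 + (1/17:ℝ)^2/2 + (1/17:ℝ)^3/3 + (1/17:ℝ)^4/4 + (1/17:ℝ)^5/5 + (1/17:ℝ)^6/6 + (1/17:ℝ)^7/7 := by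
    norm_num [Finset.sum_range_succ]
  rw [hsum] at h
  obtain ⟨h1, h2⟩ := h
  rw [abs_of_nonneg (by norm_num : (0:ℝ) ≤ 1/17)] at h1 h2
  constructor
  · nlinarith [h2]
  · nlinarith [h1]

theorem logm17 : (57158413731/1000000000000 : ℝ) ≤ Real.log (18/17)
    ∧ Real.log ((18:ℝ)/17) ≤ (2286336557/40000000000 : ℝ) := by
  have h := Real.abs_log_sub_add_sum_range_le (x := (1/18 : ℝ)) (by rw [abs_of_nonneg] <;> norm_num) 7
  have e1 : (1:ℝ) - 1/18 = 17/18 := by norm_num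
  have e2 : Real.log ((17:ℝ)/18) = -Real.log (18/17) := by
    rw [← Real.log_inv]; norm_num
  rw [e1, e2, abs_le] at h
  have hsum : (∑ i ∈ Finset.range 7, (1/18 : ℝ) ^ (i + 1) / (i + 1))
      = 1/18 + (1/18:ℝ)^2/2 + (1/18:ℝ)^3/3 + (1/18:ℝ)^4/4 + (1/18:ℝ)^5/5 + (1/18:ℝ)^6/6 + (1/18:ℝ)^7/7 := by
    norm_num [Finset.sum_range_succ]
  rw [hsum] at h
  obtain ⟨h1, h2⟩ := h
  rw [abs_of_nonneg (by norm_num : (0:ℝ) ≤ 1/18)] at h1 h2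
  constructor
  · nlinarith [h2]
  · nlinarith [h1]

theorem logm18 : (135168053/2500000000 : ℝ) ≤ Real.log (19/18)
    ∧ Real.log ((19:ℝ)/18) ≤ (2162688853/40000000000 : ℝ) := by
  have h := Real.abs_log_sub_add_sum_range_le (x := (1/19 : ℝ)) (by rw [abs_of_nonneg] <;> norm_num) 7
  have e1 : (1:ℝ) - 1/19 = 18/19 := by norm_num
  have e2 : Real.log ((18:ℝ)/19) = -Real.log (19/18) := by
    rw [← Real.log_inv]; norm_num
  rw [e1, e2, abs_le] at h
  have hsum : (∑ i ∈ Finset.range 7, (1/19 : ℝ) ^ (i + 1) / (i + 1))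
      = 1/19 + (1/19:ℝ)^2/2 + (1/19:ℝ)^3/3 + (1/19:ℝ)^4/4 + (1/19:ℝ)^5/5 + (1/19:ℝ)^6/6 + (1/19:ℝ)^7/7 := by
    norm_num [Finset.sum_range_succ]
  rw [hsum] at h
  obtain ⟨h1, h2⟩ := h
  rw [abs_of_nonneg (by norm_num : (0:ℝ) ≤ 1/19)] at h1 h2
  constructor
  · nlinarith [h2]
  · nlinarith [h1]

theorem logm19 : (51293294341/1000000000000 : ℝ) ≤ Real.log (20/19)
    ∧ Real.log ((20:ℝ)/19) ≤ (6411661803/125000000000 : ℝ) := by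
  have h := Real.abs_log_sub_add_sum_range_le (x := (1/20 : ℝ)) (by rw [abs_of_nonneg] <;> norm_num) 7
  have e1 : (1:ℝ) - 1/20 = 19/20 := by norm_num
  have e2 : Real.log ((19:ℝ)/20) = -Real.log (20/19) := by
    rw [← Real.log_inv]; norm_num
  rw [e1, e2, abs_le] at h
  have hsum : (∑ i ∈ Finset.range 7, (1/20 : ℝ) ^ (i + 1) / (i + 1))
      = 1/20 + (1/20:ℝ)^2/2 + (1/20:ℝ)^3/3 + (1/20:ℝ)^4/4 + (1/20:ℝ)^5/5 + (1/20:ℝ)^6/6 + (1/20:ℝ)^7/7 := by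
    norm_num [Finset.sum_range_succ]
  rw [hsum] at h
  obtain ⟨h1, h2⟩ := h
  rw [abs_of_nonneg (by norm_num : (0:ℝ) ≤ 1/20)] at h1 h2
  constructor
  · nlinarith [h2]
  · nlinarith [h1]

theorem logm20 : (24395082069/500000000000 : ℝ) ≤ Real.log (21/20)
    ∧ Real.log ((21:ℝ)/20) ≤ (24395082097/500000000000 : ℝ) := by
  have h := Real.abs_log_sub_add_sum_range_le (x := (1/21 : ℝ)) (by rw [abs_of_nonneg] <;> norm_num) 7
  have e1 : (1:ℝ) - 1/21 = 20/21 := by norm_num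
  have e2 : Real.log ((20:ℝ)/21) = -Real.log (21/20) := by
    rw [← Real.log_inv]; norm_num
  rw [e1, e2, abs_le] at h
  have hsum : (∑ i ∈ Finset.range 7, (1/21 : ℝ) ^ (i + 1) / (i + 1))
      = 1/21 + (1/21:ℝ)^2/2 + (1/21:ℝ)^3/3 + (1/21:ℝ)^4/4 + (1/21:ℝ)^5/5 + (1/21:ℝ)^6/6 + (1/21:ℝ)^7/7 := by
    norm_num [Finset.sum_range_succ]
  rw [hsum] at h
  obtain ⟨h1, h2⟩ := h
  rw [abs_of_nonneg (by norm_num : (0:ℝ) ≤ 1/21)] at h1 h2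
  constructor
  · nlinarith [h2]
  · nlinarith [h1]

theorem logm21 : (46520015613/1000000000000 : ℝ) ≤ Real.log (22/21)
    ∧ Real.log ((22:ℝ)/21) ≤ (11630003913/250000000000 : ℝ) := by
  have h := Real.abs_log_sub_add_sum_range_le (x := (1/22 : ℝ)) (by rw [abs_of_nonneg] <;> norm_num) 7
  have e1 : (1:ℝ) - 1/22 = 21/22 := by norm_num
  have e2 : Real.log ((21:ℝ)/22) = -Real.log (22/21) := by
    rw [← Real.log_inv]; norm_num
  rw [e1, e2, abs_le] at h
  have hsum : (∑ i ∈ Finset.range 7, (1/22 : ℝ) ^ (i + 1) / (i + 1))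
      = 1/22 + (1/22:ℝ)^2/2 + (1/22:ℝ)^3/3 + (1/22:ℝ)^4/4 + (1/22:ℝ)^5/5 + (1/22:ℝ)^6/6 + (1/22:ℝ)^7/7 := by
    norm_num [Finset.sum_range_succ]
  rw [hsum] at h
  obtain ⟨h1, h2⟩ := h
  rw [abs_of_nonneg (by norm_num : (0:ℝ) ≤ 1/22)] at h1 h2
  constructor
  · nlinarith [h2]
  · nlinarith [h1]

theorem logm22 : (8890352511/200000000000 : ℝ) ≤ Real.log (23/22)
    ∧ Real.log ((23:ℝ)/22) ≤ (44451762583/1000000000000 : ℝ) := by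
  have h := Real.abs_log_sub_add_sum_range_le (x := (1/23 : ℝ)) (by rw [abs_of_nonneg] <;> norm_num) 7
  have e1 : (1:ℝ) - 1/23 = 22/23 := by norm_num
  have e2 : Real.log ((22:ℝ)/23) = -Real.log (23/22) := by
    rw [← Real.log_inv]; norm_num
  rw [e1, e2, abs_le] at h
  have hsum : (∑ i ∈ Finset.range 7, (1/23 : ℝ) ^ (i + 1) / (i + 1))
      = 1/23 + (1/23:ℝ)^2/2 + (1/23:ℝ)^3/3 + (1/23:ℝ)^4/4 + (1/23:ℝ)^5/5 + (1/23:ℝ)^6/6 + (1/23:ℝ)^7/7 := by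
    norm_num [Finset.sum_range_succ]
  rw [hsum] at h
  obtain ⟨h1, h2⟩ := h
  rw [abs_of_nonneg (by norm_num : (0:ℝ) ≤ 1/23)] at h1 h2
  constructor
  · nlinarith [h2]
  · nlinarith [h1]

theorem logm23 : (5319951801/125000000000 : ℝ) ≤ Real.log (24/23)
    ∧ Real.log ((24:ℝ)/23) ≤ (10639903607/250000000000 : ℝ) := by
  have h := Real.abs_log_sub_add_sum_range_le (x := (1/24 : ℝ)) (by rw [abs_of_nonneg] <;> norm_num) 7
  have e1 : (1:ℝ) - 1/24 = 23/24 := by norm_num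
  have e2 : Real.log ((23:ℝ)/24) = -Real.log (24/23) := by
    rw [← Real.log_inv]; norm_num
  rw [e1, e2, abs_le] at h
  have hsum : (∑ i ∈ Finset.range 7, (1/24 : ℝ) ^ (i + 1) / (i + 1))
      = 1/24 + (1/24:ℝ)^2/2 + (1/24:ℝ)^3/3 + (1/24:ℝ)^4/4 + (1/24:ℝ)^5/5 + (1/24:ℝ)^6/6 + (1/24:ℝ)^7/7 := by
    norm_num [Finset.sum_range_succ]
  rw [hsum] at h
  obtain ⟨h1, h2⟩ := h
  rw [abs_of_nonneg (by norm_num : (0:ℝ) ≤ 1/24)] at h1 h2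
  constructor
  · nlinarith [h2]
  · nlinarith [h1]

theorem logm24 : (2551374657/62500000000 : ℝ) ≤ Real.log (25/24)
    ∧ Real.log ((25:ℝ)/24) ≤ (40821994527/1000000000000 : ℝ) := by
  have h := Real.abs_log_sub_add_sum_range_le (x := (1/25 : ℝ)) (by rw [abs_of_nonneg] <;> norm_num) 7
  have e1 : (1:ℝ) - 1/25 = 24/25 := by norm_num
  have e2 : Real.log ((24:ℝ)/25) = -Real.log (25/24) := by
    rw [← Real.log_inv]; norm_num
  rw [e1, e2, abs_le] at h
  have hsum : (∑ i ∈ Finset.range 7, (1/25 : ℝ) ^ (i + 1) / (i + 1))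
      = 1/25 + (1/25:ℝ)^2/2 + (1/25:ℝ)^3/3 + (1/25:ℝ)^4/4 + (1/25:ℝ)^5/5 + (1/25:ℝ)^6/6 + (1/25:ℝ)^7/7 := by
    norm_num [Finset.sum_range_succ]
  rw [hsum] at h
  obtain ⟨h1, h2⟩ := h
  rw [abs_of_nonneg (by norm_num : (0:ℝ) ≤ 1/25)] at h1 h2
  constructor
  · nlinarith [h2]
  · nlinarith [h1]

theorem logm25 : (39220713147/1000000000000 : ℝ) ≤ Real.log (26/25)
    ∧ Real.log ((26:ℝ)/25) ≤ (19610356579/500000000000 : ℝ) := by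
  have h := Real.abs_log_sub_add_sum_range_le (x := (1/26 : ℝ)) (by rw [abs_of_nonneg] <;> norm_num) 7
  have e1 : (1:ℝ) - 1/26 = 25/26 := by norm_num
  have e2 : Real.log ((25:ℝ)/26) = -Real.log (26/25) := by
    rw [← Real.log_inv]; norm_num
  rw [e1, e2, abs_le] at h
  have hsum : (∑ i ∈ Finset.range 7, (1/26 : ℝ) ^ (i + 1) / (i + 1))
      = 1/26 + (1/26:ℝ)^2/2 + (1/26:ℝ)^3/3 + (1/26:ℝ)^4/4 + (1/26:ℝ)^5/5 + (1/26:ℝ)^6/6 + (1/26:ℝ)^7/7 := by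
    norm_num [Finset.sum_range_succ]
  rw [hsum] at h
  obtain ⟨h1, h2⟩ := h
  rw [abs_of_nonneg (by norm_num : (0:ℝ) ≤ 1/26)] at h1 h2
  constructor
  · nlinarith [h2]
  · nlinarith [h1]

theorem logm26 : (18870163989/500000000000 : ℝ) ≤ Real.log (27/26)
    ∧ Real.log ((27:ℝ)/26) ≤ (37740327987/1000000000000 : ℝ) := by
  have h := Real.abs_log_sub_add_sum_range_le (x := (1/27 : ℝ)) (by rw [abs_of_nonneg] <;> norm_num) 7
  have e1 : (1:ℝ) - 1/27 = 26/27 := by norm_num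
  have e2 : Real.log ((26:ℝ)/27) = -Real.log (27/26) := by
    rw [← Real.log_inv]; norm_num
  rw [e1, e2, abs_le] at h
  have hsum : (∑ i ∈ Finset.range 7, (1/27 : ℝ) ^ (i + 1) / (i + 1))
      = 1/27 + (1/27:ℝ)^2/2 + (1/27:ℝ)^3/3 + (1/27:ℝ)^4/4 + (1/27:ℝ)^5/5 + (1/27:ℝ)^6/6 + (1/27:ℝ)^7/7 := by
    norm_num [Finset.sum_range_succ]
  rw [hsum] at h
  obtain ⟨h1, h2⟩ := h
  rw [abs_of_nonneg (by norm_num : (0:ℝ) ≤ 1/27)] at h1 h2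
  constructor
  · nlinarith [h2]
  · nlinarith [h1]

theorem logm27 : (36367644167/1000000000000 : ℝ) ≤ Real.log (28/27)
    ∧ Real.log ((28:ℝ)/27) ≤ (18183822087/500000000000 : ℝ) := by
  have h := Real.abs_log_sub_add_sum_range_le (x := (1/28 : ℝ)) (by rw [abs_of_nonneg] <;> norm_num) 7
  have e1 : (1:ℝ) - 1/28 = 27/28 := by norm_num
  have e2 : Real.log ((27:ℝ)/28) = -Real.log (28/27) := by
    rw [← Real.log_inv]; norm_num
  rw [e1, e2, abs_le] at h
  have hsum : (∑ i ∈ Finset.range 7, (1/28 : ℝ) ^ (i + 1) / (i + 1))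
      = 1/28 + (1/28:ℝ)^2/2 + (1/28:ℝ)^3/3 + (1/28:ℝ)^4/4 + (1/28:ℝ)^5/5 + (1/28:ℝ)^6/6 + (1/28:ℝ)^7/7 := by
    norm_num [Finset.sum_range_succ]
  rw [hsum] at h
  obtain ⟨h1, h2⟩ := h
  rw [abs_of_nonneg (by norm_num : (0:ℝ) ≤ 1/28)] at h1 h2
  constructor
  · nlinarith [h2]
  · nlinarith [h1]

theorem logm28 : (34268867/976562500 : ℝ) ≤ Real.log (29/28)
    ∧ Real.log ((29:ℝ)/28) ≤ (17545659907/500000000000 : ℝ) := by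
  have h := Real.abs_log_sub_add_sum_range_le (x := (1/29 : ℝ)) (by rw [abs_of_nonneg] <;> norm_num) 7
  have e1 : (1:ℝ) - 1/29 = 28/29 := by norm_num
  have e2 : Real.log ((28:ℝ)/29) = -Real.log (29/28) := by
    rw [← Real.log_inv]; norm_num
  rw [e1, e2, abs_le] at h
  have hsum : (∑ i ∈ Finset.range 7, (1/29 : ℝ) ^ (i + 1) / (i + 1))
      = 1/29 + (1/29:ℝ)^2/2 + (1/29:ℝ)^3/3 + (1/29:ℝ)^4/4 + (1/29:ℝ)^5/5 + (1/29:ℝ)^6/6 + (1/29:ℝ)^7/7 := by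
    norm_num [Finset.sum_range_succ]
  rw [hsum] at h
  obtain ⟨h1, h2⟩ := h
  rw [abs_of_nonneg (by norm_num : (0:ℝ) ≤ 1/29)] at h1 h2
  constructor
  · nlinarith [h2]
  · nlinarith [h1]

theorem logm29 : (33901551673/1000000000000 : ℝ) ≤ Real.log (30/29)
    ∧ Real.log ((30:ℝ)/29) ≤ (16950775839/500000000000 : ℝ) := by
  have h := Real.abs_log_sub_add_sum_range_le (x := (1/30 : ℝ)) (by rw [abs_of_nonneg] <;> norm_num) 7
  have e1 : (1:ℝ) - 1/30 = 29/30 := by norm_num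
  have e2 : Real.log ((29:ℝ)/30) = -Real.log (30/29) := by
    rw [← Real.log_inv]; norm_num
  rw [e1, e2, abs_le] at h
  have hsum : (∑ i ∈ Finset.range 7, (1/30 : ℝ) ^ (i + 1) / (i + 1))
      = 1/30 + (1/30:ℝ)^2/2 + (1/30:ℝ)^3/3 + (1/30:ℝ)^4/4 + (1/30:ℝ)^5/5 + (1/30:ℝ)^6/6 + (1/30:ℝ)^7/7 := by
    norm_num [Finset.sum_range_succ]
  rw [hsum] at h
  obtain ⟨h1, h2⟩ := h
  rw [abs_of_nonneg (by norm_num : (0:ℝ) ≤ 1/30)] at h1 h2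
  constructor
  · nlinarith [h2]
  · nlinarith [h1]

theorem logm30 : (32789822821/1000000000000 : ℝ) ≤ Real.log (31/30)
    ∧ Real.log ((31:ℝ)/30) ≤ (1311592913/40000000000 : ℝ) := by
  have h := Real.abs_log_sub_add_sum_range_le (x := (1/31 : ℝ)) (by rw [abs_of_nonneg] <;> norm_num) 7
  have e1 : (1:ℝ) - 1/31 = 30/31 := by norm_num
  have e2 : Real.log ((30:ℝ)/31) = -Real.log (31/30) := by
    rw [← Real.log_inv]; norm_num
  rw [e1, e2, abs_le] at h
  have hsum : (∑ i ∈ Finset.range 7, (1/31 : ℝ) ^ (i + 1) / (i + 1))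
      = 1/31 + (1/31:ℝ)^2/2 + (1/31:ℝ)^3/3 + (1/31:ℝ)^4/4 + (1/31:ℝ)^5/5 + (1/31:ℝ)^6/6 + (1/31:ℝ)^7/7 := by
    norm_num [Finset.sum_range_succ]
  rw [hsum] at h
  obtain ⟨h1, h2⟩ := h
  rw [abs_of_nonneg (by norm_num : (0:ℝ) ≤ 1/31)] at h1 h2
  constructor
  · nlinarith [h2]
  · nlinarith [h1]

set_option maxHeartbeats 4000000 in
/-- The Buchstab function `w` satisfies `w u < 0.5644` for `u ≥ 3`
and `w u < 0.5617` for `u ≥ 4`. -/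
theorem buchstab_lt_of_three_le_and_four_le
    (w : ℝ → ℝ)
    (hwcont : ContinuousOn w (Set.Ici 1))
    (hwinit : ∀ u : ℝ, 1 ≤ u → u ≤ 2 → w u = 1 / u)
    (hwdiff : ∀ u : ℝ, 2 ≤ u →
      HasDerivWithinAt (fun x => x * w x) (w (u - 1)) (Set.Ici 2) u) :
    (∀ u : ℝ, 3 ≤ u → w u < 0.5644) ∧ (∀ u : ℝ, 4 ≤ u → w u < 0.5617) := by
  have hA0 : (2:ℝ) * w 2 ≤ (1 : ℝ) := by
    rw [hwinit 2 (by norm_num) (by norm_num)]; norm_num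
  have hV0 : ∀ u ∈ Set.Icc (2 : ℝ) (17/8 : ℝ), w u ≤ (105882353/200000000 : ℝ) := by
    refine BuchstabAux.interval_bound hwcont hwdiff (a := (2 : ℝ)) (b := (17/8 : ℝ))
      (A := (1 : ℝ)) (S := (1 : ℝ)) (V := (105882353/200000000 : ℝ))
      (by norm_num) (by norm_num) hA0
      (by intro s hs
          rw [hwinit s (by linarith [hs.1]) (by linarith [hs.2]),
            div_le_iff₀ (show (0:ℝ) < s by linarith [hs.1])]
          nlinarith [hs.1])
      (by norm_num) (by norm_num)
  have hW0 : ∀ u ∈ Set.Icc (2 : ℝ) (17/8 : ℝ), w u ≤ (1 : ℝ) + (-1 : ℝ) / u := by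
    refine BuchstabAux.pointwise_bound hwcont hwdiff (a := (2 : ℝ)) (b := (17/8 : ℝ))
      (A := (1 : ℝ)) (S := (1 : ℝ)) (c := (-1 : ℝ))
      (by norm_num) (by norm_num) hA0
      (by intro s hs
          rw [hwinit s (by linarith [hs.1]) (by linarith [hs.2]),
            div_le_iff₀ (show (0:ℝ) < s by linarith [hs.1])]
          nlinarith [hs.1])
      (by norm_num)
  have hA1 : (17/8 : ℝ) * w (17/8 : ℝ) ≤ (1117783059/1000000000 : ℝ) := by
    refine BuchstabAux.step hwcont hwdiff (a := (2 : ℝ)) (b := (17/8 : ℝ))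
      (A := (1 : ℝ)) (S := (0 : ℝ)) (c := (1 : ℝ)) (J := (11778305857/100000000000 : ℝ)) (A' := (1117783059/1000000000 : ℝ))
      (by norm_num) (by norm_num) hA0
      (by intro s hs
          rw [hwinit s (by linarith [hs.1]) (by linarith [hs.2]), zero_add])
      (by rw [show ((17/8 : ℝ) - 1) / ((2 : ℝ) - 1) = ((9:ℝ)/8) from by norm_num]
          linarith [logm8.1, logm8.2])
      (by norm_num)
  have hV1 : ∀ u ∈ Set.Icc (17/8 : ℝ) (9/4 : ℝ), w u ≤ (546175187/1000000000 : ℝ) := by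
    refine BuchstabAux.interval_bound hwcont hwdiff (a := (17/8 : ℝ)) (b := (9/4 : ℝ))
      (A := (1117783059/1000000000 : ℝ)) (S := (8/9 : ℝ)) (V := (546175187/1000000000 : ℝ))
      (by norm_num) (by norm_num) hA1
      (by intro s hs
          rw [hwinit s (by linarith [hs.1]) (by linarith [hs.2]),
            div_le_iff₀ (show (0:ℝ) < s by linarith [hs.1])]
          nlinarith [hs.1])
      (by norm_num) (by norm_num)
  have hW1 : ∀ u ∈ Set.Icc (17/8 : ℝ) (9/4 : ℝ), w u ≤ (8/9 : ℝ) + (-6939952469/9000000000 : ℝ) / u := by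
    refine BuchstabAux.pointwise_bound hwcont hwdiff (a := (17/8 : ℝ)) (b := (9/4 : ℝ))
      (A := (1117783059/1000000000 : ℝ)) (S := (8/9 : ℝ)) (c := (-6939952469/9000000000 : ℝ))
      (by norm_num) (by norm_num) hA1
      (by intro s hs
          rw [hwinit s (by linarith [hs.1]) (by linarith [hs.2]),
            div_le_iff₀ (show (0:ℝ) < s by linarith [hs.1])]
          nlinarith [hs.1])
      (by norm_num)
  have hA2 : (9/4 : ℝ) * w (9/4 : ℝ) ≤ (244628717/200000000 : ℝ) := by
    refine BuchstabAux.step hwcont hwdiff (a := (17/8 : ℝ)) (b := (9/4 : ℝ))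
      (A := (1117783059/1000000000 : ℝ)) (S := (0 : ℝ)) (c := (1 : ℝ)) (J := (52680262699/500000000000 : ℝ)) (A' := (244628717/200000000 : ℝ))
      (by norm_num) (by norm_num) hA1
      (by intro s hs
          rw [hwinit s (by linarith [hs.1]) (by linarith [hs.2]), zero_add])
      (by rw [show ((9/4 : ℝ) - 1) / ((17/8 : ℝ) - 1) = ((10:ℝ)/9) from by norm_num]
          linarith [logm9.1, logm9.2])
      (by norm_num)
  have hV2 : ∀ u ∈ Set.Icc (9/4 : ℝ) (19/8 : ℝ), w u ≤ (557113089/1000000000 : ℝ) := by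
    refine BuchstabAux.interval_bound hwcont hwdiff (a := (9/4 : ℝ)) (b := (19/8 : ℝ))
      (A := (244628717/200000000 : ℝ)) (S := (4/5 : ℝ)) (V := (557113089/1000000000 : ℝ))
      (by norm_num) (by norm_num) hA2
      (by intro s hs
          rw [hwinit s (by linarith [hs.1]) (by linarith [hs.2]),
            div_le_iff₀ (show (0:ℝ) < s by linarith [hs.1])]
          nlinarith [hs.1])
      (by norm_num) (by norm_num)
  have hW2 : ∀ u ∈ Set.Icc (9/4 : ℝ) (19/8 : ℝ), w u ≤ (4/5 : ℝ) + (-115371283/200000000 : ℝ) / u := by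
    refine BuchstabAux.pointwise_bound hwcont hwdiff (a := (9/4 : ℝ)) (b := (19/8 : ℝ))
      (A := (244628717/200000000 : ℝ)) (S := (4/5 : ℝ)) (c := (-115371283/200000000 : ℝ))
      (by norm_num) (by norm_num) hA2
      (by intro s hs
          rw [hwinit s (by linarith [hs.1]) (by linarith [hs.2]),
            div_le_iff₀ (show (0:ℝ) < s by linarith [hs.1])]
          nlinarith [hs.1])
      (by norm_num)
  have hA3 : (19/8 : ℝ) * w (19/8 : ℝ) ≤ (131845377/100000000 : ℝ) := by
    refine BuchstabAux.step hwcont hwdiff (a := (9/4 : ℝ)) (b := (19/8 : ℝ))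
      (A := (244628717/200000000 : ℝ)) (S := (0 : ℝ)) (c := (1 : ℝ)) (J := (95310184303/1000000000000 : ℝ)) (A' := (131845377/100000000 : ℝ))
      (by norm_num) (by norm_num) hA2
      (by intro s hs
          rw [hwinit s (by linarith [hs.1]) (by linarith [hs.2]), zero_add])
      (by rw [show ((19/8 : ℝ) - 1) / ((9/4 : ℝ) - 1) = ((11:ℝ)/10) from by norm_num]
          linarith [logm10.1, logm10.2])
      (by norm_num)
  have hV3 : ∀ u ∈ Set.Icc (19/8 : ℝ) (5/2 : ℝ), w u ≤ (112749029/200000000 : ℝ) := by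
    refine BuchstabAux.interval_bound hwcont hwdiff (a := (19/8 : ℝ)) (b := (5/2 : ℝ))
      (A := (131845377/100000000 : ℝ)) (S := (8/11 : ℝ)) (V := (112749029/200000000 : ℝ))
      (by norm_num) (by norm_num) hA3
      (by intro s hs
          rw [hwinit s (by linarith [hs.1]) (by linarith [hs.2]),
            div_le_iff₀ (show (0:ℝ) < s by linarith [hs.1])]
          nlinarith [hs.1])
      (by norm_num) (by norm_num)
  have hW3 : ∀ u ∈ Set.Icc (19/8 : ℝ) (5/2 : ℝ), w u ≤ (8/11 : ℝ) + (-449700853/1100000000 : ℝ) / u := by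
    refine BuchstabAux.pointwise_bound hwcont hwdiff (a := (19/8 : ℝ)) (b := (5/2 : ℝ))
      (A := (131845377/100000000 : ℝ)) (S := (8/11 : ℝ)) (c := (-449700853/1100000000 : ℝ))
      (by norm_num) (by norm_num) hA3
      (by intro s hs
          rw [hwinit s (by linarith [hs.1]) (by linarith [hs.2]),
            div_le_iff₀ (show (0:ℝ) < s by linarith [hs.1])]
          nlinarith [hs.1])
      (by norm_num)
  have hA4 : (5/2 : ℝ) * w (5/2 : ℝ) ≤ (28109303/20000000 : ℝ) := by
    refine BuchstabAux.step hwcont hwdiff (a := (19/8 : ℝ)) (b := (5/2 : ℝ))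
      (A := (131845377/100000000 : ℝ)) (S := (0 : ℝ)) (c := (1 : ℝ)) (J := (43505689607/500000000000 : ℝ)) (A' := (28109303/20000000 : ℝ))
      (by norm_num) (by norm_num) hA3
      (by intro s hs
          rw [hwinit s (by linarith [hs.1]) (by linarith [hs.2]), zero_add])
      (by rw [show ((5/2 : ℝ) - 1) / ((19/8 : ℝ) - 1) = ((12:ℝ)/11) from by norm_num]
          linarith [logm11.1, logm11.2])
      (by norm_num)
  have hV4 : ∀ u ∈ Set.Icc (5/2 : ℝ) (21/8 : ℝ), w u ≤ (567161327/1000000000 : ℝ) := by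
    refine BuchstabAux.interval_bound hwcont hwdiff (a := (5/2 : ℝ)) (b := (21/8 : ℝ))
      (A := (28109303/20000000 : ℝ)) (S := (2/3 : ℝ)) (V := (567161327/1000000000 : ℝ))
      (by norm_num) (by norm_num) hA4
      (by intro s hs
          rw [hwinit s (by linarith [hs.1]) (by linarith [hs.2]),
            div_le_iff₀ (show (0:ℝ) < s by linarith [hs.1])]
          nlinarith [hs.1])
      (by norm_num) (by norm_num)
  have hW4 : ∀ u ∈ Set.Icc (5/2 : ℝ) (21/8 : ℝ), w u ≤ (2/3 : ℝ) + (-15672091/60000000 : ℝ) / u := by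
    refine BuchstabAux.pointwise_bound hwcont hwdiff (a := (5/2 : ℝ)) (b := (21/8 : ℝ))
      (A := (28109303/20000000 : ℝ)) (S := (2/3 : ℝ)) (c := (-15672091/60000000 : ℝ))
      (by norm_num) (by norm_num) hA4
      (by intro s hs
          rw [hwinit s (by linarith [hs.1]) (by linarith [hs.2]),
            div_le_iff₀ (show (0:ℝ) < s by linarith [hs.1])]
          nlinarith [hs.1])
      (by norm_num)
  have hA5 : (21/8 : ℝ) * w (21/8 : ℝ) ≤ (1485507859/1000000000 : ℝ) := by
    refine BuchstabAux.step hwcont hwdiff (a := (5/2 : ℝ)) (b := (21/8 : ℝ))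
      (A := (28109303/20000000 : ℝ)) (S := (0 : ℝ)) (c := (1 : ℝ)) (J := (80042708839/1000000000000 : ℝ)) (A' := (1485507859/1000000000 : ℝ))
      (by norm_num) (by norm_num) hA4
      (by intro s hs
          rw [hwinit s (by linarith [hs.1]) (by linarith [hs.2]), zero_add])
      (by rw [show ((21/8 : ℝ) - 1) / ((5/2 : ℝ) - 1) = ((13:ℝ)/12) from by norm_num]
          linarith [logm12.1, logm12.2])
      (by norm_num)
  have hV5 : ∀ u ∈ Set.Icc (21/8 : ℝ) (11/4 : ℝ), w u ≤ (17754897/31250000 : ℝ) := by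
    refine BuchstabAux.interval_bound hwcont hwdiff (a := (21/8 : ℝ)) (b := (11/4 : ℝ))
      (A := (1485507859/1000000000 : ℝ)) (S := (8/13 : ℝ)) (V := (17754897/31250000 : ℝ))
      (by norm_num) (by norm_num) hA5
      (by intro s hs
          rw [hwinit s (by linarith [hs.1]) (by linarith [hs.2]),
            div_le_iff₀ (show (0:ℝ) < s by linarith [hs.1])]
          nlinarith [hs.1])
      (by norm_num) (by norm_num)
  have hW5 : ∀ u ∈ Set.Icc (21/8 : ℝ) (11/4 : ℝ), w u ≤ (8/13 : ℝ) + (-1688397833/13000000000 : ℝ) / u := by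
    refine BuchstabAux.pointwise_bound hwcont hwdiff (a := (21/8 : ℝ)) (b := (11/4 : ℝ))
      (A := (1485507859/1000000000 : ℝ)) (S := (8/13 : ℝ)) (c := (-1688397833/13000000000 : ℝ))
      (by norm_num) (by norm_num) hA5
      (by intro s hs
          rw [hwinit s (by linarith [hs.1]) (by linarith [hs.2]),
            div_le_iff₀ (show (0:ℝ) < s by linarith [hs.1])]
          nlinarith [hs.1])
      (by norm_num)
  have hA6 : (11/4 : ℝ) * w (11/4 : ℝ) ≤ (194951979/125000000 : ℝ) := by
    refine BuchstabAux.step hwcont hwdiff (a := (21/8 : ℝ)) (b := (11/4 : ℝ))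
      (A := (1485507859/1000000000 : ℝ)) (S := (0 : ℝ)) (c := (1 : ℝ)) (J := (14821594559/200000000000 : ℝ)) (A' := (194951979/125000000 : ℝ))
      (by norm_num) (by norm_num) hA5
      (by intro s hs
          rw [hwinit s (by linarith [hs.1]) (by linarith [hs.2]), zero_add])
      (by rw [show ((11/4 : ℝ) - 1) / ((21/8 : ℝ) - 1) = ((14:ℝ)/13) from by norm_num]
          linarith [logm13.1, logm13.2])
      (by norm_num)
  have hV6 : ∀ u ∈ Set.Icc (11/4 : ℝ) (23/8 : ℝ), w u ≤ (567319793/1000000000 : ℝ) := by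
    refine BuchstabAux.interval_bound hwcont hwdiff (a := (11/4 : ℝ)) (b := (23/8 : ℝ))
      (A := (194951979/125000000 : ℝ)) (S := (4/7 : ℝ)) (V := (567319793/1000000000 : ℝ))
      (by norm_num) (by norm_num) hA6
      (by intro s hs
          rw [hwinit s (by linarith [hs.1]) (by linarith [hs.2]),
            div_le_iff₀ (show (0:ℝ) < s by linarith [hs.1])]
          nlinarith [hs.1])
      (by norm_num) (by norm_num)
  have hW6 : ∀ u ∈ Set.Icc (11/4 : ℝ) (23/8 : ℝ), w u ≤ (4/7 : ℝ) + (-10336147/875000000 : ℝ) / u := by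
    refine BuchstabAux.pointwise_bound hwcont hwdiff (a := (11/4 : ℝ)) (b := (23/8 : ℝ))
      (A := (194951979/125000000 : ℝ)) (S := (4/7 : ℝ)) (c := (-10336147/875000000 : ℝ))
      (by norm_num) (by norm_num) hA6
      (by intro s hs
          rw [hwinit s (by linarith [hs.1]) (by linarith [hs.2]),
            div_le_iff₀ (show (0:ℝ) < s by linarith [hs.1])]
          nlinarith [hs.1])
      (by norm_num)
  have hA7 : (23/8 : ℝ) * w (23/8 : ℝ) ≤ (25447011/15625000 : ℝ) := by
    refine BuchstabAux.step hwcont hwdiff (a := (11/4 : ℝ)) (b := (23/8 : ℝ))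
      (A := (194951979/125000000 : ℝ)) (S := (0 : ℝ)) (c := (1 : ℝ)) (J := (13798574371/200000000000 : ℝ)) (A' := (25447011/15625000 : ℝ))
      (by norm_num) (by norm_num) hA6
      (by intro s hs
          rw [hwinit s (by linarith [hs.1]) (by linarith [hs.2]), zero_add])
      (by rw [show ((23/8 : ℝ) - 1) / ((11/4 : ℝ) - 1) = ((15:ℝ)/14) from by norm_num]
          linarith [logm14.1, logm14.2])
      (by norm_num)
  have hV7 : ∀ u ∈ Set.Icc (23/8 : ℝ) (3 : ℝ), w u ≤ (566472593/1000000000 : ℝ) := by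
    refine BuchstabAux.interval_bound hwcont hwdiff (a := (23/8 : ℝ)) (b := (3 : ℝ))
      (A := (25447011/15625000 : ℝ)) (S := (8/15 : ℝ)) (V := (566472593/1000000000 : ℝ))
      (by norm_num) (by norm_num) hA7
      (by intro s hs
          rw [hwinit s (by linarith [hs.1]) (by linarith [hs.2]),
            div_le_iff₀ (show (0:ℝ) < s by linarith [hs.1])]
          nlinarith [hs.1])
      (by norm_num) (by norm_num)
  have hW7 : ∀ u ∈ Set.Icc (23/8 : ℝ) (3 : ℝ), w u ≤ (8/15 : ℝ) + (4466033/46875000 : ℝ) / u := by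
    refine BuchstabAux.pointwise_bound hwcont hwdiff (a := (23/8 : ℝ)) (b := (3 : ℝ))
      (A := (25447011/15625000 : ℝ)) (S := (8/15 : ℝ)) (c := (4466033/46875000 : ℝ))
      (by norm_num) (by norm_num) hA7
      (by intro s hs
          rw [hwinit s (by linarith [hs.1]) (by linarith [hs.2]),
            div_le_iff₀ (show (0:ℝ) < s by linarith [hs.1])]
          nlinarith [hs.1])
      (by norm_num)
  have hA8 : (3 : ℝ) * w (3 : ℝ) ≤ (846573613/500000000 : ℝ) := by
    refine BuchstabAux.step hwcont hwdiff (a := (23/8 : ℝ)) (b := (3 : ℝ))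
      (A := (25447011/15625000 : ℝ)) (S := (0 : ℝ)) (c := (1 : ℝ)) (J := (64538521357/1000000000000 : ℝ)) (A' := (846573613/500000000 : ℝ))
      (by norm_num) (by norm_num) hA7
      (by intro s hs
          rw [hwinit s (by linarith [hs.1]) (by linarith [hs.2]), zero_add])
      (by rw [show ((3 : ℝ) - 1) / ((23/8 : ℝ) - 1) = ((16:ℝ)/15) from by norm_num]
          linarith [logm15.1, logm15.2])
      (by norm_num)
  have hV8 : ∀ u ∈ Set.Icc (3 : ℝ) (25/8 : ℝ), w u ≤ (564382409/1000000000 : ℝ) := by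
    refine BuchstabAux.interval_bound hwcont hwdiff (a := (3 : ℝ)) (b := (25/8 : ℝ))
      (A := (846573613/500000000 : ℝ)) (S := (105882353/200000000 : ℝ)) (V := (564382409/1000000000 : ℝ))
      (by norm_num) (by norm_num) hA8
      (by intro s hs; exact hV0 s ⟨by linarith [hs.1], by linarith [hs.2]⟩)
      (by norm_num) (by norm_num)
  have hW8 : ∀ u ∈ Set.Icc (3 : ℝ) (25/8 : ℝ), w u ≤ (105882353/200000000 : ℝ) + (104911931/1000000000 : ℝ) / u := by
    refine BuchstabAux.pointwise_bound hwcont hwdiff (a := (3 : ℝ)) (b := (25/8 : ℝ))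
      (A := (846573613/500000000 : ℝ)) (S := (105882353/200000000 : ℝ)) (c := (104911931/1000000000 : ℝ))
      (by norm_num) (by norm_num) hA8
      (by intro s hs; exact hV0 s ⟨by linarith [hs.1], by linarith [hs.2]⟩)
      (by norm_num)
  have hA9 : (25/8 : ℝ) * w (25/8 : ℝ) ≤ (351504521/200000000 : ℝ) := by
    refine BuchstabAux.step hwcont hwdiff (a := (3 : ℝ)) (b := (25/8 : ℝ))
      (A := (846573613/500000000 : ℝ)) (S := (1 : ℝ)) (c := (-1 : ℝ)) (J := (-15156155411/250000000000 : ℝ)) (A' := (351504521/200000000 : ℝ))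
      (by norm_num) (by norm_num) hA8
      (by intro s hs; exact hW0 s ⟨by linarith [hs.1], by linarith [hs.2]⟩)
      (by rw [show ((25/8 : ℝ) - 1) / ((3 : ℝ) - 1) = ((17:ℝ)/16) from by norm_num]
          linarith [logm16.1, logm16.2])
      (by norm_num)
  have hV9 : ∀ u ∈ Set.Icc (25/8 : ℝ) (13/4 : ℝ), w u ≤ (281203617/500000000 : ℝ) := by
    refine BuchstabAux.interval_bound hwcont hwdiff (a := (25/8 : ℝ)) (b := (13/4 : ℝ))
      (A := (351504521/200000000 : ℝ)) (S := (546175187/1000000000 : ℝ)) (V := (281203617/500000000 : ℝ))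
      (by norm_num) (by norm_num) hA9
      (by intro s hs; exact hV1 s ⟨by linarith [hs.1], by linarith [hs.2]⟩)
      (by norm_num) (by norm_num)
  have hW9 : ∀ u ∈ Set.Icc (25/8 : ℝ) (13/4 : ℝ), w u ≤ (546175187/1000000000 : ℝ) + (81160233/1600000000 : ℝ) / u := by
    refine BuchstabAux.pointwise_bound hwcont hwdiff (a := (25/8 : ℝ)) (b := (13/4 : ℝ))
      (A := (351504521/200000000 : ℝ)) (S := (546175187/1000000000 : ℝ)) (c := (81160233/1600000000 : ℝ))
      (by norm_num) (by norm_num) hA9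
      (by intro s hs; exact hV1 s ⟨by linarith [hs.1], by linarith [hs.2]⟩)
      (by norm_num)
  have hA10 : (13/4 : ℝ) * w (13/4 : ℝ) ≤ (1824558531/1000000000 : ℝ) := by
    refine BuchstabAux.step hwcont hwdiff (a := (25/8 : ℝ)) (b := (13/4 : ℝ))
      (A := (351504521/200000000 : ℝ)) (S := (8/9 : ℝ)) (c := (-6939952469/9000000000 : ℝ)) (J := (-8815037211/200000000000 : ℝ)) (A' := (1824558531/1000000000 : ℝ))
      (by norm_num) (by norm_num) hA9
      (by intro s hs; exact hW1 s ⟨by linarith [hs.1], by linarith [hs.2]⟩)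
      (by rw [show ((13/4 : ℝ) - 1) / ((25/8 : ℝ) - 1) = ((18:ℝ)/17) from by norm_num]
          linarith [logm17.1, logm17.2])
      (by norm_num)
  have hV10 : ∀ u ∈ Set.Icc (13/4 : ℝ) (27/8 : ℝ), w u ≤ (4491221/8000000 : ℝ) := by
    refine BuchstabAux.interval_bound hwcont hwdiff (a := (13/4 : ℝ)) (b := (27/8 : ℝ))
      (A := (1824558531/1000000000 : ℝ)) (S := (557113089/1000000000 : ℝ)) (V := (4491221/8000000 : ℝ))
      (by norm_num) (by norm_num) hA10
      (by intro s hs; exact hV2 s ⟨by linarith [hs.1], by linarith [hs.2]⟩)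
      (by norm_num) (by norm_num)
  have hW10 : ∀ u ∈ Set.Icc (13/4 : ℝ) (27/8 : ℝ), w u ≤ (557113089/1000000000 : ℝ) + (55763967/4000000000 : ℝ) / u := by
    refine BuchstabAux.pointwise_bound hwcont hwdiff (a := (13/4 : ℝ)) (b := (27/8 : ℝ))
      (A := (1824558531/1000000000 : ℝ)) (S := (557113089/1000000000 : ℝ)) (c := (55763967/4000000000 : ℝ))
      (by norm_num) (by norm_num) hA10
      (by intro s hs; exact hV2 s ⟨by linarith [hs.1], by linarith [hs.2]⟩)
      (by norm_num)
  have hA11 : (27/8 : ℝ) * w (27/8 : ℝ) ≤ (473342377/250000000 : ℝ) := by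
    refine BuchstabAux.step hwcont hwdiff (a := (13/4 : ℝ)) (b := (27/8 : ℝ))
      (A := (1824558531/1000000000 : ℝ)) (S := (4/5 : ℝ)) (c := (-115371283/200000000 : ℝ)) (J := (-3118902339/100000000000 : ℝ)) (A' := (473342377/250000000 : ℝ))
      (by norm_num) (by norm_num) hA10
      (by intro s hs; exact hW2 s ⟨by linarith [hs.1], by linarith [hs.2]⟩)
      (by rw [show ((27/8 : ℝ) - 1) / ((13/4 : ℝ) - 1) = ((19:ℝ)/18) from by norm_num]
          linarith [logm18.1, logm18.2])
      (by norm_num)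
  have hV11 : ∀ u ∈ Set.Icc (27/8 : ℝ) (7/2 : ℝ), w u ≤ (70137059/125000000 : ℝ) := by
    refine BuchstabAux.interval_bound hwcont hwdiff (a := (27/8 : ℝ)) (b := (7/2 : ℝ))
      (A := (473342377/250000000 : ℝ)) (S := (112749029/200000000 : ℝ)) (V := (70137059/125000000 : ℝ))
      (by norm_num) (by norm_num) hA11
      (by intro s hs; exact hV3 s ⟨by linarith [hs.1], by linarith [hs.2]⟩)
      (by norm_num) (by norm_num)
  have hW11 : ∀ u ∈ Set.Icc (27/8 : ℝ) (7/2 : ℝ), w u ≤ (112749029/200000000 : ℝ) + (-74162851/8000000000 : ℝ) / u := by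
    refine BuchstabAux.pointwise_bound hwcont hwdiff (a := (27/8 : ℝ)) (b := (7/2 : ℝ))
      (A := (473342377/250000000 : ℝ)) (S := (112749029/200000000 : ℝ)) (c := (-74162851/8000000000 : ℝ))
      (by norm_num) (by norm_num) hA11
      (by intro s hs; exact hV3 s ⟨by linarith [hs.1], by linarith [hs.2]⟩)
      (by norm_num)
  have hA12 : (7/2 : ℝ) * w (7/2 : ℝ) ≤ (15338351/7812500 : ℝ) := by
    refine BuchstabAux.step hwcont hwdiff (a := (27/8 : ℝ)) (b := (7/2 : ℝ))
      (A := (473342377/250000000 : ℝ)) (S := (8/11 : ℝ)) (c := (-449700853/1100000000 : ℝ)) (J := (-20969671107/1000000000000 : ℝ)) (A' := (15338351/7812500 : ℝ))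
      (by norm_num) (by norm_num) hA11
      (by intro s hs; exact hW3 s ⟨by linarith [hs.1], by linarith [hs.2]⟩)
      (by rw [show ((7/2 : ℝ) - 1) / ((27/8 : ℝ) - 1) = ((20:ℝ)/19) from by norm_num]
          linarith [logm19.1, logm19.2])
      (by norm_num)
  have hV12 : ∀ u ∈ Set.Icc (7/2 : ℝ) (29/8 : ℝ), w u ≤ (561159751/1000000000 : ℝ) := by
    refine BuchstabAux.interval_bound hwcont hwdiff (a := (7/2 : ℝ)) (b := (29/8 : ℝ))
      (A := (15338351/7812500 : ℝ)) (S := (567161327/1000000000 : ℝ)) (V := (561159751/1000000000 : ℝ))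
      (by norm_num) (by norm_num) hA12
      (by intro s hs; exact hV4 s ⟨by linarith [hs.1], by linarith [hs.2]⟩)
      (by norm_num) (by norm_num)
  have hW12 : ∀ u ∈ Set.Icc (7/2 : ℝ) (29/8 : ℝ), w u ≤ (567161327/1000000000 : ℝ) + (-43511433/2000000000 : ℝ) / u := by
    refine BuchstabAux.pointwise_bound hwcont hwdiff (a := (7/2 : ℝ)) (b := (29/8 : ℝ))
      (A := (15338351/7812500 : ℝ)) (S := (567161327/1000000000 : ℝ)) (c := (-43511433/2000000000 : ℝ))
      (by norm_num) (by norm_num) hA12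
      (by intro s hs; exact hV4 s ⟨by linarith [hs.1], by linarith [hs.2]⟩)
      (by norm_num)
  have hA13 : (29/8 : ℝ) * w (29/8 : ℝ) ≤ (2033898197/1000000000 : ℝ) := by
    refine BuchstabAux.step hwcont hwdiff (a := (7/2 : ℝ)) (b := (29/8 : ℝ))
      (A := (15338351/7812500 : ℝ)) (S := (2/3 : ℝ)) (c := (-15672091/60000000 : ℝ)) (J := (-12744064871/1000000000000 : ℝ)) (A' := (2033898197/1000000000 : ℝ))
      (by norm_num) (by norm_num) hA12
      (by intro s hs; exact hW4 s ⟨by linarith [hs.1], by linarith [hs.2]⟩)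
      (by rw [show ((29/8 : ℝ) - 1) / ((7/2 : ℝ) - 1) = ((21:ℝ)/20) from by norm_num]
          linarith [logm20.1, logm20.2])
      (by norm_num)
  have hV13 : ∀ u ∈ Set.Icc (29/8 : ℝ) (15/4 : ℝ), w u ≤ (56131141/100000000 : ℝ) := by
    refine BuchstabAux.interval_bound hwcont hwdiff (a := (29/8 : ℝ)) (b := (15/4 : ℝ))
      (A := (2033898197/1000000000 : ℝ)) (S := (17754897/31250000 : ℝ)) (V := (56131141/100000000 : ℝ))
      (by norm_num) (by norm_num) hA13
      (by intro s hs; exact hV5 s ⟨by linarith [hs.1], by linarith [hs.2]⟩)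
      (by norm_num) (by norm_num)
  have hW13 : ∀ u ∈ Set.Icc (29/8 : ℝ) (15/4 : ℝ), w u ≤ (17754897/31250000 : ℝ) + (-5133971/200000000 : ℝ) / u := by
    refine BuchstabAux.pointwise_bound hwcont hwdiff (a := (29/8 : ℝ)) (b := (15/4 : ℝ))
      (A := (2033898197/1000000000 : ℝ)) (S := (17754897/31250000 : ℝ)) (c := (-5133971/200000000 : ℝ))
      (by norm_num) (by norm_num) hA13
      (by intro s hs; exact hV5 s ⟨by linarith [hs.1], by linarith [hs.2]⟩)
      (by norm_num)
  have hA14 : (15/4 : ℝ) * w (15/4 : ℝ) ≤ (1052389703/500000000 : ℝ) := by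
    refine BuchstabAux.step hwcont hwdiff (a := (29/8 : ℝ)) (b := (15/4 : ℝ))
      (A := (2033898197/1000000000 : ℝ)) (S := (8/13 : ℝ)) (c := (-1688397833/13000000000 : ℝ)) (J := (-3020934367/500000000000 : ℝ)) (A' := (1052389703/500000000 : ℝ))
      (by norm_num) (by norm_num) hA13
      (by intro s hs; exact hW5 s ⟨by linarith [hs.1], by linarith [hs.2]⟩)
      (by rw [show ((15/4 : ℝ) - 1) / ((29/8 : ℝ) - 1) = ((22:ℝ)/21) from by norm_num]
          linarith [logm21.1, logm21.2])
      (by norm_num)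
  have hV14 : ∀ u ∈ Set.Icc (15/4 : ℝ) (31/8 : ℝ), w u ≤ (280734759/500000000 : ℝ) := by
    refine BuchstabAux.interval_bound hwcont hwdiff (a := (15/4 : ℝ)) (b := (31/8 : ℝ))
      (A := (1052389703/500000000 : ℝ)) (S := (567319793/1000000000 : ℝ)) (V := (280734759/500000000 : ℝ))
      (by norm_num) (by norm_num) hA14
      (by intro s hs; exact hV6 s ⟨by linarith [hs.1], by linarith [hs.2]⟩)
      (by norm_num) (by norm_num)
  have hW14 : ∀ u ∈ Set.Icc (15/4 : ℝ) (31/8 : ℝ), w u ≤ (567319793/1000000000 : ℝ) + (-90679271/4000000000 : ℝ) / u := by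
    refine BuchstabAux.pointwise_bound hwcont hwdiff (a := (15/4 : ℝ)) (b := (31/8 : ℝ))
      (A := (1052389703/500000000 : ℝ)) (S := (567319793/1000000000 : ℝ)) (c := (-90679271/4000000000 : ℝ))
      (by norm_num) (by norm_num) hA14
      (by intro s hs; exact hV6 s ⟨by linarith [hs.1], by linarith [hs.2]⟩)
      (by norm_num)
  have hA15 : (31/8 : ℝ) * w (31/8 : ℝ) ≤ (2175682881/1000000000 : ℝ) := by
    refine BuchstabAux.step hwcont hwdiff (a := (15/4 : ℝ)) (b := (31/8 : ℝ))
      (A := (1052389703/500000000 : ℝ)) (S := (4/7 : ℝ)) (c := (-10336147/875000000 : ℝ)) (J := (-4102321/7812500000 : ℝ)) (A' := (2175682881/1000000000 : ℝ))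
      (by norm_num) (by norm_num) hA14
      (by intro s hs; exact hW6 s ⟨by linarith [hs.1], by linarith [hs.2]⟩)
      (by rw [show ((31/8 : ℝ) - 1) / ((15/4 : ℝ) - 1) = ((23:ℝ)/22) from by norm_num]
          linarith [logm22.1, logm22.2])
      (by norm_num)
  have hV15 : ∀ u ∈ Set.Icc (31/8 : ℝ) (4 : ℝ), w u ≤ (561622989/1000000000 : ℝ) := by
    refine BuchstabAux.interval_bound hwcont hwdiff (a := (31/8 : ℝ)) (b := (4 : ℝ))
      (A := (2175682881/1000000000 : ℝ)) (S := (566472593/1000000000 : ℝ)) (V := (561622989/1000000000 : ℝ))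
      (by norm_num) (by norm_num) hA15
      (by intro s hs; exact hV7 s ⟨by linarith [hs.1], by linarith [hs.2]⟩)
      (by norm_num) (by norm_num)
  have hA16 : (4 : ℝ) * w (4 : ℝ) ≤ (2246404431/1000000000 : ℝ) := by
    refine BuchstabAux.step hwcont hwdiff (a := (31/8 : ℝ)) (b := (4 : ℝ))
      (A := (2175682881/1000000000 : ℝ)) (S := (8/15 : ℝ)) (c := (4466033/46875000 : ℝ)) (J := (4054883041/1000000000000 : ℝ)) (A' := (2246404431/1000000000 : ℝ))
      (by norm_num) (by norm_num) hA15
      (by intro s hs; exact hW7 s ⟨by linarith [hs.1], by linarith [hs.2]⟩)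
      (by rw [show ((4 : ℝ) - 1) / ((31/8 : ℝ) - 1) = ((24:ℝ)/23) from by norm_num]
          linarith [logm23.1, logm23.2])
      (by norm_num)
  have hV16 : ∀ u ∈ Set.Icc (4 : ℝ) (33/8 : ℝ), w u ≤ (56168539/100000000 : ℝ) := by
    refine BuchstabAux.interval_bound hwcont hwdiff (a := (4 : ℝ)) (b := (33/8 : ℝ))
      (A := (2246404431/1000000000 : ℝ)) (S := (564382409/1000000000 : ℝ)) (V := (56168539/100000000 : ℝ))
      (by norm_num) (by norm_num) hA16
      (by intro s hs; exact hV8 s ⟨by linarith [hs.1], by linarith [hs.2]⟩)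
      (by norm_num) (by norm_num)
  have hA17 : (33/8 : ℝ) * w (33/8 : ℝ) ≤ (18100497/7812500 : ℝ) := by
    refine BuchstabAux.step hwcont hwdiff (a := (4 : ℝ)) (b := (33/8 : ℝ))
      (A := (2246404431/1000000000 : ℝ)) (S := (105882353/200000000 : ℝ)) (c := (104911931/1000000000 : ℝ)) (J := (2141357137/500000000000 : ℝ)) (A' := (18100497/7812500 : ℝ))
      (by norm_num) (by norm_num) hA16
      (by intro s hs; exact hW8 s ⟨by linarith [hs.1], by linarith [hs.2]⟩)
      (by rw [show ((33/8 : ℝ) - 1) / ((4 : ℝ) - 1) = ((25:ℝ)/24) from by norm_num]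
          linarith [logm24.1, logm24.2])
      (by norm_num)
  have hV17 : ∀ u ∈ Set.Icc (33/8 : ℝ) (17/4 : ℝ), w u ≤ (56168577/100000000 : ℝ) := by
    refine BuchstabAux.interval_bound hwcont hwdiff (a := (33/8 : ℝ)) (b := (17/4 : ℝ))
      (A := (18100497/7812500 : ℝ)) (S := (281203617/500000000 : ℝ)) (V := (56168577/100000000 : ℝ))
      (by norm_num) (by norm_num) hA17
      (by intro s hs; exact hV9 s ⟨by linarith [hs.1], by linarith [hs.2]⟩)
      (by norm_num) (by norm_num)
  have hA18 : (17/4 : ℝ) * w (17/4 : ℝ) ≤ (2387124991/1000000000 : ℝ) := by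
    refine BuchstabAux.step hwcont hwdiff (a := (33/8 : ℝ)) (b := (17/4 : ℝ))
      (A := (18100497/7812500 : ℝ)) (S := (546175187/1000000000 : ℝ)) (c := (81160233/1600000000 : ℝ)) (J := (1989476387/1000000000000 : ℝ)) (A' := (2387124991/1000000000 : ℝ))
      (by norm_num) (by norm_num) hA17
      (by intro s hs; exact hW9 s ⟨by linarith [hs.1], by linarith [hs.2]⟩)
      (by rw [show ((17/4 : ℝ) - 1) / ((33/8 : ℝ) - 1) = ((26:ℝ)/25) from by norm_num]
          linarith [logm25.1, logm25.2])
      (by norm_num)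
  have hV18 : ∀ u ∈ Set.Icc (17/4 : ℝ) (35/8 : ℝ), w u ≤ (561676469/1000000000 : ℝ) := by
    refine BuchstabAux.interval_bound hwcont hwdiff (a := (17/4 : ℝ)) (b := (35/8 : ℝ))
      (A := (2387124991/1000000000 : ℝ)) (S := (4491221/8000000 : ℝ)) (V := (561676469/1000000000 : ℝ))
      (by norm_num) (by norm_num) hA18
      (by intro s hs; exact hV10 s ⟨by linarith [hs.1], by linarith [hs.2]⟩)
      (by norm_num) (by norm_num)
  have hA19 : (35/8 : ℝ) * w (35/8 : ℝ) ≤ (491458053/200000000 : ℝ) := by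
    refine BuchstabAux.step hwcont hwdiff (a := (17/4 : ℝ)) (b := (35/8 : ℝ))
      (A := (2387124991/1000000000 : ℝ)) (S := (557113089/1000000000 : ℝ)) (c := (55763967/4000000000 : ℝ)) (J := (263068801/500000000000 : ℝ)) (A' := (491458053/200000000 : ℝ))
      (by norm_num) (by norm_num) hA18
      (by intro s hs; exact hW10 s ⟨by linarith [hs.1], by linarith [hs.2]⟩)
      (by rw [show ((35/8 : ℝ) - 1) / ((17/4 : ℝ) - 1) = ((27:ℝ)/26) from by norm_num]
          linarith [logm26.1, logm26.2])
      (by norm_num)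
  have hV19 : ∀ u ∈ Set.Icc (35/8 : ℝ) (9/2 : ℝ), w u ≤ (561666347/1000000000 : ℝ) := by
    refine BuchstabAux.interval_bound hwcont hwdiff (a := (35/8 : ℝ)) (b := (9/2 : ℝ))
      (A := (491458053/200000000 : ℝ)) (S := (70137059/125000000 : ℝ)) (V := (561666347/1000000000 : ℝ))
      (by norm_num) (by norm_num) hA19
      (by intro s hs; exact hV11 s ⟨by linarith [hs.1], by linarith [hs.2]⟩)
      (by norm_num) (by norm_num)
  have hA20 : (9/2 : ℝ) * w (9/2 : ℝ) ≤ (631855317/250000000 : ℝ) := by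
    refine BuchstabAux.step hwcont hwdiff (a := (35/8 : ℝ)) (b := (9/2 : ℝ))
      (A := (491458053/200000000 : ℝ)) (S := (112749029/200000000 : ℝ)) (c := (-74162851/8000000000 : ℝ)) (J := (-337141021/1000000000000 : ℝ)) (A' := (631855317/250000000 : ℝ))
      (by norm_num) (by norm_num) hA19
      (by intro s hs; exact hW11 s ⟨by linarith [hs.1], by linarith [hs.2]⟩)
      (by rw [show ((9/2 : ℝ) - 1) / ((35/8 : ℝ) - 1) = ((28:ℝ)/27) from by norm_num]
          linarith [logm27.1, logm27.2])
      (by norm_num)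
  have hV20 : ∀ u ∈ Set.Icc (9/2 : ℝ) (37/8 : ℝ), w u ≤ (561649171/1000000000 : ℝ) := by
    refine BuchstabAux.interval_bound hwcont hwdiff (a := (9/2 : ℝ)) (b := (37/8 : ℝ))
      (A := (631855317/250000000 : ℝ)) (S := (561159751/1000000000 : ℝ)) (V := (561649171/1000000000 : ℝ))
      (by norm_num) (by norm_num) hA20
      (by intro s hs; exact hV12 s ⟨by linarith [hs.1], by linarith [hs.2]⟩)
      (by norm_num) (by norm_num)
  have hA21 : (37/8 : ℝ) * w (37/8 : ℝ) ≤ (1298776499/500000000 : ℝ) := by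
    refine BuchstabAux.step hwcont hwdiff (a := (9/2 : ℝ)) (b := (37/8 : ℝ))
      (A := (631855317/250000000 : ℝ)) (S := (567161327/1000000000 : ℝ)) (c := (-43511433/2000000000 : ℝ)) (J := (-152687361/200000000000 : ℝ)) (A' := (1298776499/500000000 : ℝ))
      (by norm_num) (by norm_num) hA20
      (by intro s hs; exact hW12 s ⟨by linarith [hs.1], by linarith [hs.2]⟩)
      (by rw [show ((37/8 : ℝ) - 1) / ((9/2 : ℝ) - 1) = ((29:ℝ)/28) from by norm_num]
          linarith [logm28.1, logm28.2])
      (by norm_num)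
  have hV21 : ∀ u ∈ Set.Icc (37/8 : ℝ) (19/4 : ℝ), w u ≤ (561633081/1000000000 : ℝ) := by
    refine BuchstabAux.interval_bound hwcont hwdiff (a := (37/8 : ℝ)) (b := (19/4 : ℝ))
      (A := (1298776499/500000000 : ℝ)) (S := (56131141/100000000 : ℝ)) (V := (561633081/1000000000 : ℝ))
      (by norm_num) (by norm_num) hA21
      (by intro s hs; exact hV13 s ⟨by linarith [hs.1], by linarith [hs.2]⟩)
      (by norm_num) (by norm_num)
  have hA22 : (19/4 : ℝ) * w (19/4 : ℝ) ≤ (2667702339/1000000000 : ℝ) := by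
    refine BuchstabAux.step hwcont hwdiff (a := (37/8 : ℝ)) (b := (19/4 : ℝ))
      (A := (1298776499/500000000 : ℝ)) (S := (17754897/31250000 : ℝ)) (c := (-5133971/200000000 : ℝ)) (J := (-174049583/200000000000 : ℝ)) (A' := (2667702339/1000000000 : ℝ))
      (by norm_num) (by norm_num) hA21
      (by intro s hs; exact hW13 s ⟨by linarith [hs.1], by linarith [hs.2]⟩)
      (by rw [show ((19/4 : ℝ) - 1) / ((37/8 : ℝ) - 1) = ((30:ℝ)/29) from by norm_num]
          linarith [logm29.1, logm29.2])
      (by norm_num)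
  have hV22 : ∀ u ∈ Set.Icc (19/4 : ℝ) (39/8 : ℝ), w u ≤ (280810773/500000000 : ℝ) := by
    refine BuchstabAux.interval_bound hwcont hwdiff (a := (19/4 : ℝ)) (b := (39/8 : ℝ))
      (A := (2667702339/1000000000 : ℝ)) (S := (280734759/500000000 : ℝ)) (V := (280810773/500000000 : ℝ))
      (by norm_num) (by norm_num) hA22
      (by intro s hs; exact hV14 s ⟨by linarith [hs.1], by linarith [hs.2]⟩)
      (by norm_num) (by norm_num)
  have hA23 : (39/8 : ℝ) * w (39/8 : ℝ) ≤ (1368936987/500000000 : ℝ) := by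
    refine BuchstabAux.step hwcont hwdiff (a := (19/4 : ℝ)) (b := (39/8 : ℝ))
      (A := (2667702339/1000000000 : ℝ)) (S := (567319793/1000000000 : ℝ)) (c := (-90679271/4000000000 : ℝ)) (J := (-743339307/1000000000000 : ℝ)) (A' := (1368936987/500000000 : ℝ))
      (by norm_num) (by norm_num) hA22
      (by intro s hs; exact hW14 s ⟨by linarith [hs.1], by linarith [hs.2]⟩)
      (by rw [show ((39/8 : ℝ) - 1) / ((19/4 : ℝ) - 1) = ((31:ℝ)/30) from by norm_num]
          linarith [logm30.1, logm30.2])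
      (by norm_num)
  have hV23 : ∀ u ∈ Set.Icc (39/8 : ℝ) (5 : ℝ), w u ≤ (56161537/100000000 : ℝ) := by
    refine BuchstabAux.interval_bound hwcont hwdiff (a := (39/8 : ℝ)) (b := (5 : ℝ))
      (A := (1368936987/500000000 : ℝ)) (S := (561622989/1000000000 : ℝ)) (V := (56161537/100000000 : ℝ))
      (by norm_num) (by norm_num) hA23
      (by intro s hs; exact hV15 s ⟨by linarith [hs.1], by linarith [hs.2]⟩)
      (by norm_num) (by norm_num)
  have h34 : ∀ u : ℝ, (3:ℝ) ≤ u → u ≤ 4 → w u ≤ (564382409/1000000000 : ℝ) := by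
    intro u hu0 hu1
    rcases le_total u (25/8 : ℝ) with hc0 | hc0
    · exact le_trans (hV8 u ⟨hu0, hc0⟩) (by norm_num)
    rcases le_total u (13/4 : ℝ) with hc1 | hc1
    · exact le_trans (hV9 u ⟨hc0, hc1⟩) (by norm_num)
    rcases le_total u (27/8 : ℝ) with hc2 | hc2
    · exact le_trans (hV10 u ⟨hc1, hc2⟩) (by norm_num)
    rcases le_total u (7/2 : ℝ) with hc3 | hc3
    · exact le_trans (hV11 u ⟨hc2, hc3⟩) (by norm_num)
    rcases le_total u (29/8 : ℝ) with hc4 | hc4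
    · exact le_trans (hV12 u ⟨hc3, hc4⟩) (by norm_num)
    rcases le_total u (15/4 : ℝ) with hc5 | hc5
    · exact le_trans (hV13 u ⟨hc4, hc5⟩) (by norm_num)
    rcases le_total u (31/8 : ℝ) with hc6 | hc6
    · exact le_trans (hV14 u ⟨hc5, hc6⟩) (by norm_num)
    exact le_trans (hV15 u ⟨hc6, hu1⟩) (by norm_num)
  have h45 : ∀ u : ℝ, (4:ℝ) ≤ u → u ≤ 5 → w u ≤ (56168577/100000000 : ℝ) := by
    intro u hu0 hu1
    rcases le_total u (33/8 : ℝ) with hc0 | hc0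
    · exact le_trans (hV16 u ⟨hu0, hc0⟩) (by norm_num)
    rcases le_total u (17/4 : ℝ) with hc1 | hc1
    · exact le_trans (hV17 u ⟨hc0, hc1⟩) (by norm_num)
    rcases le_total u (35/8 : ℝ) with hc2 | hc2
    · exact le_trans (hV18 u ⟨hc1, hc2⟩) (by norm_num)
    rcases le_total u (9/2 : ℝ) with hc3 | hc3
    · exact le_trans (hV19 u ⟨hc2, hc3⟩) (by norm_num)
    rcases le_total u (37/8 : ℝ) with hc4 | hc4
    · exact le_trans (hV20 u ⟨hc3, hc4⟩) (by norm_num)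
    rcases le_total u (19/4 : ℝ) with hc5 | hc5
    · exact le_trans (hV21 u ⟨hc4, hc5⟩) (by norm_num)
    rcases le_total u (39/8 : ℝ) with hc6 | hc6
    · exact le_trans (hV22 u ⟨hc5, hc6⟩) (by norm_num)
    exact le_trans (hV23 u ⟨hc6, hu1⟩) (by norm_num)
  have htail : ∀ u : ℝ, 5 ≤ u → w u ≤ (56168577/100000000 : ℝ) :=
    BuchstabAux.tail hwcont hwdiff (by intro s hs; exact h45 s hs.1 hs.2)
  constructor
  · intro u hu
    rcases le_total u 4 with h | h
    · exact lt_of_le_of_lt (h34 u hu h) (by norm_num)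
    rcases le_total u 5 with h2 | h2
    · exact lt_of_le_of_lt (h45 u h h2) (by norm_num)
    · exact lt_of_le_of_lt (htail u h2) (by norm_num)
  · intro u hu
    rcases le_total u 5 with h | h
    · exact lt_of_le_of_lt (h45 u hu h) (by norm_num)
    · exact lt_of_le_of_lt (htail u h) (by norm_num)
end
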